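/- arXiv:1501.05579 — 6 statements merged into one kernel-verified Lean document; each statement's English description precedes it below -/
import Mathlib

section
/- Let G = ⟨H, t | t a t⁻¹ = φ(a) for a ∈ A⟩ be an HNN extension of H with associated subgroups A, B ≤ H and isomorphism φ : A → B, and let η : Σ → G be a finite symmetric generating set of G. Then the set of words over Σ representing an element of the canonical image of H is strongly negligible if and only if both [H : A] ≥ 2 and [H : B] ≥ 2. -/
universe u

open Monoid

/-- The number of words of length `n` over `α` lying in `L`. -/
noncomputable def wordCount {α : Type*} (L : Set (List α)) (n : ℕ) : ℕ :=
  Nat.card {w : List α // w ∈ L ∧ w.length = n}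

/-- A set of words over a finite alphabet is strongly negligible: the number of its words of
length `n` is at most `C·ρⁿ·|Σ|ⁿ` for some constants `C > 0` and `0 < ρ < 1`. -/
def StronglyNegligible {α : Type*} [Fintype α] (L : Set (List α)) : Prop :=
  ∃ C ρ : ℝ, 0 < C ∧ 0 < ρ ∧ ρ < 1 ∧ ∀ n : ℕ,
    (wordCount L n : ℝ) ≤ C * ρ ^ n * (Fintype.card α : ℝ) ^ n

/-- A set of words is strongly generic if its complement is strongly negligible. -/
def StronglyGeneric {α : Type*} [Fintype α] (L : Set (List α)) : Prop :=
  StronglyNegligible Lᶜ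

/-- `η : α → G` together with the involution `inv` is a symmetric generating set:
`inv` is a fixed-point-free involution, `η (inv a) = (η a)⁻¹`, and the image of `η`
generates `G` as a group. -/
def IsSymmetricGen {α G : Type*} [Group G] (η : α → G) (inv : α → α) : Prop :=
  (∀ a, inv (inv a) = a) ∧ (∀ a, inv a ≠ a) ∧ (∀ a, η (inv a) = (η a)⁻¹) ∧
    Subgroup.closure (Set.range η) = ⊤

/-- The element of `G` represented by a word over `α`. -/
def evalWord {α G : Type*} [Monoid G] (η : α → G) (w : List α) : G :=
  (w.map η).prod


/-!
If `A = H`, conjugation by `t` maps `H` into itself (if `B = H`, use `t⁻¹`). Hence, if a word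
`w` has `t`-exponent sum zero and all its prefixes have nonnegative exponent sum, then
`t ^ m w t ^ (-m)` represents an element of `H`, for some `m` depending only on the generators. Among the words of
length `2n`, a proportion `≥ 1 / (2Mn + 1)` has exponent sum zero (Cauchy–Schwarz over the exponent
sums of the two halves, `M` bounding those of the generators), and by the cycle lemma one rotation
in `2n + 1` of such a word has nonnegative prefix sums. So the words representing elements of `H`
are only polynomially rare.

If `A` and `B` are proper, pick `c ∉ A ∪ B`. By Britton's lemma the first letter `t ^ u` of the
normal form of `g`, together with its head coset, depends only on `gH`, and `t` and `c t c⁻¹` play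
ping-pong on `G / H` with the four sets so defined. Ping-pong forbids almost invariant vectors in
`ℓ²(G / H)`, which yields a spectral gap `‖M‖ < |Σ|` for the Markov operator `M` of the generators
(applied to `M ^ 2`, to cover both ends of the spectrum). The number of words of length `n`
representing elements of `H` is `⟪δ, M ^ n δ⟫ ≤ ‖M‖ ^ n`.
-/

open scoped InnerProductSpace Topology
open Filter

namespace Cogrowth

open Finset

section Words

variable {α G : Type*}

def wordInv (inv : α → α) (w : List α) : List α := (w.map inv).reverse

@[simp] lemma length_wordInv (inv : α → α) (w : List α) : (wordInv inv w).length = w.length := by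
  simp [wordInv]

lemma wordInv_cons (inv : α → α) (a : α) (w : List α) :
    wordInv inv (a :: w) = wordInv inv w ++ [inv a] := by
  simp [wordInv]

lemma wordInv_wordInv {inv : α → α} (hinv : Function.Involutive inv) (w : List α) :
    wordInv inv (wordInv inv w) = w := by
  simp [wordInv, List.map_reverse, hinv.comp_self]

@[simp] lemma evalWord_nil [Monoid G] (η : α → G) : evalWord η [] = 1 := rfl

@[simp] lemma evalWord_cons [Monoid G] (η : α → G) (a : α) (w : List α) :
    evalWord η (a :: w) = η a * evalWord η w := by
  simp [evalWord]

@[simp] lemma evalWord_append [Monoid G] (η : α → G) (w₁ w₂ : List α) :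
    evalWord η (w₁ ++ w₂) = evalWord η w₁ * evalWord η w₂ := by
  simp [evalWord]

lemma evalWord_wordInv [Group G] {η : α → G} {inv : α → α} (hη : ∀ a, η (inv a) = (η a)⁻¹)
    (w : List α) : evalWord η (wordInv inv w) = (evalWord η w)⁻¹ := by
  induction w with
  | nil => simp [wordInv]
  | cons a w ih => simp [wordInv_cons, ih, hη]

lemma IsSymmetricGen.involutive [Group G] {η : α → G} {inv : α → α}
    (hη : IsSymmetricGen η inv) : Function.Involutive inv :=
  hη.1

lemma IsSymmetricGen.apply_inv [Group G] {η : α → G} {inv : α → α}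
    (hη : IsSymmetricGen η inv) (a : α) : η (inv a) = (η a)⁻¹ :=
  hη.2.2.1 a

lemma IsSymmetricGen.exists_evalWord_eq [Group G] {η : α → G} {inv : α → α}
    (hη : IsSymmetricGen η inv) (g : G) : ∃ w, evalWord η w = g := by
  have hg : g ∈ Subgroup.closure (Set.range η) := hη.2.2.2 ▸ Subgroup.mem_top g
  induction hg using Subgroup.closure_induction with
  | mem x hx => obtain ⟨a, rfl⟩ := hx; exact ⟨[a], by simp⟩
  | one => exact ⟨[], rfl⟩
  | mul x y _ _ hx hy =>
    obtain ⟨w₁, rfl⟩ := hx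
    obtain ⟨w₂, rfl⟩ := hy
    exact ⟨w₁ ++ w₂, evalWord_append η w₁ w₂⟩
  | inv x _ hx =>
    obtain ⟨w, rfl⟩ := hx
    exact ⟨wordInv inv w, evalWord_wordInv (IsSymmetricGen.apply_inv hη) w⟩

lemma IsSymmetricGen.nonempty [Group G] [Nontrivial G] {η : α → G} {inv : α → α}
    (hη : IsSymmetricGen η inv) : Nonempty α := by
  obtain ⟨g, hg⟩ := exists_ne (1 : G)
  obtain ⟨_ | ⟨a, _⟩, hw⟩ := IsSymmetricGen.exists_evalWord_eq hη g
  · exact absurd hw.symm hg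
  · exact ⟨a⟩

lemma evalWord_mem_closure_mulPairs [Monoid G] (η : α → G) : ∀ w : List α, Even w.length →
    evalWord η w ∈ Submonoid.closure (Set.range fun ab : α × α => η ab.1 * η ab.2)
  | [], _ => one_mem _
  | [_], h => absurd h (by simp)
  | a :: b :: w, h => by
    rw [evalWord_cons, evalWord_cons, ← mul_assoc]
    exact mul_mem (Submonoid.subset_closure ⟨(a, b), rfl⟩)
      (evalWord_mem_closure_mulPairs η w (by simpa [Nat.even_add_one] using h))

def words (α : Type*) [Fintype α] (n : ℕ) : Finset (List α) :=
  (Finset.univ : Finset (Fin n → α)).map ⟨List.ofFn, List.ofFn_injective⟩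

variable [Fintype α]

@[simp] lemma mem_words {n : ℕ} {w : List α} : w ∈ words α n ↔ w.length = n := by
  refine ⟨fun hw => ?_, fun hw => ?_⟩
  · obtain ⟨f, -, rfl⟩ := Finset.mem_map.1 hw
    exact List.length_ofFn
  · subst hw
    exact Finset.mem_map.2 ⟨w.get, Finset.mem_univ _, List.ofFn_get w⟩

@[simp] lemma card_words (n : ℕ) : (words α n).card = Fintype.card α ^ n := by
  simp [words]

lemma sum_words_zero {M : Type*} [AddCommMonoid M] (F : List α → M) :
    ∑ w ∈ words α 0, F w = F [] := by
  simp [words]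

lemma sum_words_succ {M : Type*} [AddCommMonoid M] (F : List α → M) (n : ℕ) :
    ∑ w ∈ words α (n + 1), F w = ∑ a, ∑ w ∈ words α n, F (a :: w) := by
  simp only [words, Finset.sum_map, Function.Embedding.coeFn_mk]
  rw [← (Fin.consEquiv fun _ => α).sum_comp, Fintype.sum_prod_type]
  simp [Fin.consEquiv, List.ofFn_succ]

lemma wordCount_eq_card_filter (L : Set (List α)) [DecidablePred (· ∈ L)] (n : ℕ) :
    wordCount L n = #{w ∈ words α n | w ∈ L} := by
  rw [wordCount, ← Nat.card_eq_finsetCard]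
  exact Nat.card_congr (Equiv.subtypeEquivRight fun w => by simp [and_comm])

end Words

lemma sq_card_le_card_mul_card_filter_eq {ι κ : Type*} [DecidableEq κ] (s : Finset ι)
    (t : Finset κ) (f : ι → κ) (hf : Set.MapsTo f s t) :
    #s ^ 2 ≤ #t * #{p ∈ s ×ˢ s | f p.1 = f p.2} := by
  have hpairs : #{p ∈ s ×ˢ s | f p.1 = f p.2} = ∑ y ∈ t, #{x ∈ s | f x = y} ^ 2 := by
    rw [card_eq_sum_card_fiberwise (f := fun p => f p.1) (t := t)
      fun p hp => hf (mem_product.1 (mem_filter.1 hp).1).1]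
    refine sum_congr rfl fun y _ => ?_
    rw [sq, ← card_product]
    congr 1
    ext p
    simp only [mem_filter, mem_product]
    constructor
    · rintro ⟨⟨⟨h₁, h₂⟩, h⟩, rfl⟩
      exact ⟨⟨h₁, rfl⟩, h₂, h.symm⟩
    · rintro ⟨⟨h₁, rfl⟩, h₂, h⟩
      exact ⟨⟨⟨h₁, h₂⟩, h.symm⟩, rfl⟩
  rw [hpairs, card_eq_sum_card_fiberwise hf]
  exact sq_sum_le_card_mul_sum_sq

section Weight

variable {α : Type*} (s : α → ℤ)

def weight (w : List α) : ℤ := (w.map s).sum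

@[simp] lemma weight_nil : weight s [] = 0 := rfl

@[simp] lemma weight_cons (a : α) (w : List α) : weight s (a :: w) = s a + weight s w := by
  simp [weight]

@[simp] lemma weight_append (w₁ w₂ : List α) :
    weight s (w₁ ++ w₂) = weight s w₁ + weight s w₂ := by
  simp [weight]

lemma weight_wordInv {inv : α → α} (hs : ∀ a, s (inv a) = -s a) (w : List α) :
    weight s (wordInv inv w) = -weight s w := by
  induction w with
  | nil => simp [wordInv]
  | cons a w ih => simp [wordInv_cons, ih, hs]

lemma abs_weight_le {M : ℤ} (hM : ∀ a, |s a| ≤ M) (w : List α) :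
    |weight s w| ≤ M * w.length := by
  induction w with
  | nil => simp
  | cons a w ih =>
    rw [weight_cons, List.length_cons, Nat.cast_succ, mul_add_one, add_comm (M * _)]
    exact (abs_add_le _ _).trans (add_le_add (hM a) ih)

lemma weight_rotate (w : List α) (j : ℕ) : weight s (w.rotate j) = weight s w :=
  ((w.rotate_perm j).map s).sum_eq

/-- Cycle lemma: rotate the word to start right after a prefix of minimal weight. -/
lemma exists_rotate_weight_inits_nonneg (w : List α) (hw : weight s w = 0) :
    ∃ j ≤ w.length, ∀ u ∈ (w.rotate j).inits, 0 ≤ weight s u := by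
  obtain ⟨j, hj, hmin⟩ := exists_min_image (range (w.length + 1))
    (fun j => weight s (w.take j)) nonempty_range_add_one
  rw [mem_range, Nat.lt_succ_iff] at hj
  have hmin' : ∀ m, weight s (w.take j) ≤ weight s (w.take m) := fun m => by
    rw [List.take_eq_take_min (l := w) (i := m)]
    exact hmin _ (mem_range.2 (Nat.lt_succ_of_le (min_le_right _ _)))
  refine ⟨j, hj, fun u hu => ?_⟩
  rw [List.mem_inits, List.prefix_iff_eq_take] at hu
  rw [hu]
  set i := u.length
  rw [List.rotate_eq_drop_append_take hj, List.take_append, List.take_take, weight_append]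
  have hdrop : weight s ((w.drop j).take i) = weight s (w.take (j + i)) - weight s (w.take j) := by
    rw [List.take_add, weight_append]; ring
  rw [hdrop, List.length_drop]
  by_cases hi : i ≤ w.length - j
  · rw [Nat.sub_eq_zero_of_le hi, Nat.zero_min, List.take_zero, weight_nil]
    linarith [hmin' (j + i)]
  · rw [List.take_of_length_le (by omega : w.length ≤ j + i), hw]
    linarith [hmin' (min (i - (w.length - j)) j)]

variable [Fintype α]

lemma card_filter_weight_eq_zero_le (m : ℕ) :
    #{w ∈ words α m | weight s w = 0} ≤
      (m + 1) * #{w ∈ words α m | weight s w = 0 ∧ ∀ u ∈ w.inits, 0 ≤ weight s u} := by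
  have hrot : ∀ w : List α, ∃ j ≤ w.length,
      weight s w = 0 → ∀ u ∈ (w.rotate j).inits, 0 ≤ weight s u := fun w => by
    by_cases hw : weight s w = 0
    · obtain ⟨j, hj, h⟩ := exists_rotate_weight_inits_nonneg s w hw
      exact ⟨j, hj, fun _ => h⟩
    · exact ⟨0, Nat.zero_le _, fun h => absurd h hw⟩
  choose j hj hpos using hrot
  rw [mul_comm, ← card_range (m + 1), ← card_product]
  refine card_le_card_of_injOn (fun w => (w.rotate (j w), j w)) (fun w hw => ?_) ?_
  · rw [mem_coe, mem_filter, mem_words] at hw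
    rw [mem_coe, mem_product, mem_filter, mem_words, List.length_rotate, weight_rotate, mem_range]
    exact ⟨⟨hw.1, hw.2, hpos w hw.2⟩, Nat.lt_succ_of_le (hw.1 ▸ hj w)⟩
  · intro w₁ _ w₂ _ h
    simp only [Prod.mk.injEq] at h
    exact List.rotate_injective (j w₂) (h.2 ▸ h.1)

lemma sq_card_pow_le_card_filter_weight_eq_zero {inv : α → α} (hinv : Function.Involutive inv)
    (hs : ∀ a, s (inv a) = -s a) {M : ℕ} (hM : ∀ a, |s a| ≤ M) (n : ℕ) :
    (Fintype.card α ^ n) ^ 2 ≤ (2 * M * n + 1) * #{w ∈ words α (n + n) | weight s w = 0} := by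
  have hmaps : Set.MapsTo (weight s) (words α n) (Icc (-(M * n : ℤ)) (M * n)) := fun w hw => by
    rw [mem_coe, mem_words] at hw
    have := abs_weight_le s hM w
    rw [hw] at this
    exact mem_Icc.2 (abs_le.1 this)
  have hcard : #(Icc (-(M * n : ℤ)) (M * n)) = 2 * M * n + 1 := by
    rw [Int.card_Icc, ← Int.toNat_natCast (2 * M * n + 1)]
    congr 1
    push_cast
    ring
  calc (Fintype.card α ^ n) ^ 2
      ≤ #(Icc (-(M * n : ℤ)) (M * n)) *
          #{p ∈ words α n ×ˢ words α n | weight s p.1 = weight s p.2} := by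
        rw [← card_words n]; exact sq_card_le_card_mul_card_filter_eq _ _ _ hmaps
    _ ≤ (2 * M * n + 1) * #{w ∈ words α (n + n) | weight s w = 0} := by
      rw [hcard]
      refine Nat.mul_le_mul_left _ (card_le_card_of_injOn (fun p => p.1 ++ wordInv inv p.2)
        (fun p hp => ?_) fun p hp q hq h => ?_)
      · rw [mem_coe, mem_filter, mem_product, mem_words, mem_words] at hp
        rw [mem_coe, mem_filter, mem_words]
        simp [hp.1.1, hp.1.2, weight_wordInv s hs, hp.2]
      · rw [mem_coe, mem_filter, mem_product, mem_words, mem_words] at hp hq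
        obtain ⟨h₁, h₂⟩ := List.append_inj h (hp.1.1.trans hq.1.1.symm)
        exact Prod.ext h₁ (by simpa [wordInv_wordInv hinv] using congrArg (wordInv inv) h₂)

end Weight

section Drift

variable {α Γ : Type*} [Group Γ]

def eventuallyConjInto (K : Subgroup Γ) (χ : Γ →* Multiplicative ℤ) (τ : Γ) : Subgroup Γ where
  carrier := {g | ∃ m : ℤ, ∀ n ≥ m, τ ^ n * g * τ ^ (-(n + (χ g).toAdd)) ∈ K}
  one_mem' := ⟨0, fun n _ => by simp⟩
  mul_mem' := by
    rintro g₁ g₂ ⟨m₁, hm₁⟩ ⟨m₂, hm₂⟩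
    refine ⟨max m₁ (m₂ - (χ g₁).toAdd), fun n hn => ?_⟩
    have h := mul_mem (hm₁ n (le_of_max_le_left hn))
      (hm₂ (n + (χ g₁).toAdd) (by linarith [le_of_max_le_right hn]))
    rw [map_mul, toAdd_mul]
    convert h using 1
    group
  inv_mem' := by
    rintro g ⟨m, hm⟩
    refine ⟨m + (χ g).toAdd, fun n hn => ?_⟩
    have h := inv_mem (hm (n - (χ g).toAdd) (by linarith))
    rw [map_inv, toAdd_inv]
    convert h using 1
    group

lemma self_mem_eventuallyConjInto (K : Subgroup Γ) {χ : Γ →* Multiplicative ℤ} {τ : Γ}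
    (hτ : χ τ = Multiplicative.ofAdd 1) : τ ∈ eventuallyConjInto K χ τ :=
  ⟨0, fun n _ => by
    rw [hτ, toAdd_ofAdd]
    convert one_mem K using 1
    group⟩

lemma zpow_mul_evalWord_mul_zpow_mem {K : Subgroup Γ} {η : α → Γ} {τ : Γ} {s : α → ℤ} {m : ℤ}
    (hm : ∀ a, ∀ n ≥ m, τ ^ n * η a * τ ^ (-(n + s a)) ∈ K) (w : List α) (n : ℤ)
    (hw : ∀ u ∈ w.inits, m ≤ n + weight s u) :
    τ ^ n * evalWord η w * τ ^ (-(n + weight s w)) ∈ K := by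
  induction w generalizing n with
  | nil => simp
  | cons a w ih =>
    have hn : m ≤ n := by simpa using hw [] (by simp)
    have htail := ih (n + s a) fun u hu => by
      simpa [add_assoc] using hw (a :: u) (by simpa using hu)
    convert mul_mem (hm a n hn) htail using 1
    simp only [evalWord_cons, weight_cons]
    group

lemma not_stronglyNegligible_of_sq_card_pow_le [Fintype α] [Nonempty α] (L : Set (List α))
    (c d D : ℕ) (h : ∀ n, (Fintype.card α ^ n) ^ 2 ≤ c * (n + 1) ^ d * wordCount L (n + n + D)) :
    ¬ StronglyNegligible L := by
  rintro ⟨C, ρ, hC, hρ0, hρ1, hL⟩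
  set k : ℝ := (Fintype.card α : ℝ) with hk_def
  have hk : 0 < k := by positivity
  set E := c * C * ρ ^ D * k ^ D
  have hlower : ∀ n : ℕ, 1 ≤ E * (((n : ℝ) + 1) ^ d * (ρ ^ 2) ^ n) := fun n => by
    have hn : ((k ^ n) ^ 2 : ℝ) ≤ c * ((n : ℝ) + 1) ^ d * wordCount L (n + n + D) := by
      rw [hk_def]; exact_mod_cast h n
    refine le_of_mul_le_mul_left ?_ (by positivity : (0 : ℝ) < (k ^ n) ^ 2)
    calc (k ^ n) ^ 2 * 1
        ≤ c * ((n : ℝ) + 1) ^ d * (C * ρ ^ (n + n + D) * k ^ (n + n + D)) := by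
          rw [mul_one]
          exact hn.trans (mul_le_mul_of_nonneg_left (hL _) (by positivity))
      _ = (k ^ n) ^ 2 * (E * (((n : ℝ) + 1) ^ d * (ρ ^ 2) ^ n)) := by
          simp only [E, pow_add]; ring
  have hr : |ρ ^ 2| < 1 := by
    rw [abs_of_pos (by positivity)]
    exact pow_lt_one₀ hρ0.le hρ1 two_ne_zero
  have hlim : Tendsto (fun n : ℕ => E * (((n : ℝ) + 1) ^ d * (ρ ^ 2) ^ n)) atTop (𝓝 0) := by
    have h := ((tendsto_pow_const_mul_const_pow_of_abs_lt_one d hr).comp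
      (tendsto_add_atTop_nat 1)).const_mul (E / ρ ^ 2)
    rw [mul_zero] at h
    refine h.congr fun n => ?_
    simp only [Function.comp_apply, Nat.cast_add, Nat.cast_one, pow_succ]
    field_simp
  obtain ⟨n, hn⟩ := (hlim.eventually (gt_mem_nhds one_pos)).exists
  exact (hlower n).not_gt hn

lemma card_filter_weight_inits_nonneg_le_wordCount [Fintype α] {η : α → Γ} {inv : α → α}
    (hη : ∀ a, η (inv a) = (η a)⁻¹) {K : Subgroup Γ} {τ : Γ} {s : α → ℤ} {m : ℕ}
    (hm : ∀ a, ∀ n ≥ (m : ℤ), τ ^ n * η a * τ ^ (-(n + s a)) ∈ K) {U : List α}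
    (hU : evalWord η U = τ ^ m) (N : ℕ) :
    #{w ∈ words α N | weight s w = 0 ∧ ∀ u ∈ w.inits, 0 ≤ weight s u} ≤
      wordCount {w : List α | evalWord η w ∈ K} (N + 2 * U.length) := by
  classical
  rw [wordCount_eq_card_filter]
  refine card_le_card_of_injOn (fun w => U ++ w ++ wordInv inv U) (fun w hw => ?_)
    fun w₁ _ w₂ _ heq => by simpa using heq
  rw [mem_coe, mem_filter, mem_words] at hw ⊢
  refine ⟨by simp [hw.1]; ring, ?_⟩
  have hconj := zpow_mul_evalWord_mul_zpow_mem hm w m fun u hu => by linarith [hw.2.2 u hu]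
  rw [hw.2.1, add_zero, zpow_neg, zpow_natCast] at hconj
  simpa [evalWord_wordInv hη, hU, mul_assoc] using hconj

theorem not_stronglyNegligible_of_eventuallyConjInto_eq_top [Fintype α] [Nonempty α]
    {η : α → Γ} {inv : α → α} (hη : IsSymmetricGen η inv) {K : Subgroup Γ}
    {χ : Γ →* Multiplicative ℤ} {τ : Γ} (h : eventuallyConjInto K χ τ = ⊤) :
    ¬ StronglyNegligible {w : List α | evalWord η w ∈ K} := by
  set s : α → ℤ := fun a => (χ (η a)).toAdd
  have hs : ∀ a, s (inv a) = -s a := fun a => by simp [s, IsSymmetricGen.apply_inv hη a]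
  obtain ⟨M, hM⟩ := Finite.exists_le fun a => (s a).natAbs
  have hsM : ∀ a, |s a| ≤ M := fun a => by rw [Int.abs_eq_natAbs]; exact_mod_cast hM a
  obtain ⟨m, hm⟩ : ∃ m : ℕ, ∀ a, ∀ n ≥ (m : ℤ), τ ^ n * η a * τ ^ (-(n + s a)) ∈ K := by
    choose m hm using fun a => h ▸ Subgroup.mem_top (η a)
    obtain ⟨m₀, hm₀⟩ := Finite.exists_le fun a => (m a).toNat
    exact ⟨m₀, fun a n hn =>
      hm a n ((Int.self_le_toNat _).trans ((Nat.cast_le.2 (hm₀ a)).trans hn))⟩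
  obtain ⟨U, hU⟩ := IsSymmetricGen.exists_evalWord_eq hη (τ ^ m)
  refine not_stronglyNegligible_of_sq_card_pow_le _ (2 * (2 * M + 1)) 2 (2 * U.length)
    fun n => ?_
  calc (Fintype.card α ^ n) ^ 2
      ≤ (2 * M * n + 1) * #{w ∈ words α (n + n) | weight s w = 0} :=
        sq_card_pow_le_card_filter_weight_eq_zero s (IsSymmetricGen.involutive hη) hs hsM n
    _ ≤ (2 * M * n + 1) * ((n + n + 1) *
          #{w ∈ words α (n + n) | weight s w = 0 ∧ ∀ u ∈ w.inits, 0 ≤ weight s u}) :=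
        Nat.mul_le_mul_left _ (card_filter_weight_eq_zero_le s (n + n))
    _ ≤ (2 * M * n + 1) * ((n + n + 1) * wordCount _ (n + n + 2 * U.length)) := by
        gcongr
        exact card_filter_weight_inits_nonneg_le_wordCount (IsSymmetricGen.apply_inv hη) hm hU _
    _ ≤ ((2 * M + 1) * (n + 1)) * (2 * (n + 1)) * wordCount _ (n + n + 2 * U.length) := by
        rw [← mul_assoc]
        gcongr
        · nlinarith
        · omega
    _ = 2 * (2 * M + 1) * (n + 1) ^ 2 * wordCount _ (n + n + 2 * U.length) := by ring

end Drift

section Translate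

variable {V Γ : Type*} [Group Γ] [MulAction Γ V]

noncomputable def translate : Representation ℝ Γ (V →₀ ℝ) where
  toFun g := Finsupp.lmapDomain ℝ ℝ (g • ·)
  map_one' := by ext; simp
  map_mul' g h := by ext; simp [mul_smul]

@[simp] lemma translate_single (g : Γ) (v : V) (c : ℝ) :
    translate g (Finsupp.single v c) = Finsupp.single (g • v) c := by
  simp [translate]

lemma translate_apply (g : Γ) (f : V →₀ ℝ) (v : V) : translate g f v = f (g⁻¹ • v) := by
  conv_lhs => rw [← smul_inv_smul g v]
  exact Finsupp.mapDomain_apply (MulAction.injective g) f _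

lemma sum_translate (g : Γ) (f : V →₀ ℝ) {M : Type*} [AddCommMonoid M] (F : V → ℝ → M) :
    (translate g f).sum F = f.sum fun v x => F (g • v) x :=
  Finsupp.sum_mapDomain_index_inj (MulAction.injective g)

noncomputable def markov {β : Type*} [Fintype β] (s : β → Γ) : Module.End ℝ (V →₀ ℝ) :=
  ∑ b, translate (s b)

lemma markov_apply {β : Type*} [Fintype β] (s : β → Γ) (f : V →₀ ℝ) :
    markov s f = ∑ b, translate (s b) f :=
  LinearMap.sum_apply _ _ _

lemma markov_mul_self {α : Type*} [Fintype α] (η : α → Γ) :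
    markov (V := V) η * markov η = markov fun ab : α × α => η ab.1 * η ab.2 := by
  simp only [markov, sum_mul_sum, ← map_mul, Fintype.sum_prod_type]

lemma markov_pow_apply_single {α : Type*} [Fintype α] (η : α → Γ) (o : V) (n : ℕ) :
    (markov η ^ n) (Finsupp.single o 1) =
      ∑ w ∈ words α n, Finsupp.single (evalWord η w • o) (1 : ℝ) := by
  induction n with
  | zero => simp [sum_words_zero]
  | succ n ih =>
    rw [pow_succ', Module.End.mul_apply, ih, sum_words_succ, map_sum, sum_comm]
    simp [markov_apply, mul_smul]

end Translate

section L2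

variable {V : Type*} [DecidableEq V]

/-- Embedding into `ℓ²(V)` provides the norm and inner product on finitely supported
functions. -/
noncomputable def toL2 : (V →₀ ℝ) →ₗ[ℝ] lp (fun _ : V => ℝ) 2 :=
  Finsupp.linearCombination ℝ fun v => lp.single 2 v 1

lemma orthonormal_lpSingle : Orthonormal ℝ fun v : V => lp.single 2 v (1 : ℝ) := by
  rw [orthonormal_iff_ite]
  intro v w
  rw [lp.inner_single_left, lp.single_apply]
  by_cases h : v = w
  · subst h; simp
  · simp [h]

lemma inner_toL2 (f g : V →₀ ℝ) : ⟪toL2 f, toL2 g⟫_ℝ = f.sum fun v x => x * g v := by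
  simpa [toL2] using orthonormal_lpSingle.inner_finsupp_eq_sum_left f g

lemma norm_toL2_single (v : V) : ‖toL2 (Finsupp.single v (1 : ℝ))‖ = 1 := by
  simp [toL2, orthonormal_lpSingle.norm_eq_one]

lemma norm_toL2_sq (f : V →₀ ℝ) : ‖toL2 f‖ ^ 2 = f.sum fun _ x => x ^ 2 := by
  rw [← real_inner_self_eq_norm_sq, inner_toL2]
  exact Finsupp.sum_congr fun v _ => (sq (f v)).symm

lemma norm_toL2_filter_sq (f : V →₀ ℝ) (p : V → Prop) [DecidablePred p] :
    ‖toL2 (f.filter p)‖ ^ 2 = f.sum fun v x => if p v then x ^ 2 else 0 := by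
  rw [norm_toL2_sq, Finsupp.sum_filter_index, Finsupp.support_filter, Finsupp.sum, sum_filter]

lemma norm_toL2_filter_le (f : V →₀ ℝ) (p : V → Prop) [DecidablePred p] :
    ‖toL2 (f.filter p)‖ ≤ ‖toL2 f‖ := by
  refine (pow_le_pow_iff_left₀ (norm_nonneg _) (norm_nonneg _) two_ne_zero).1 ?_
  rw [norm_toL2_filter_sq, norm_toL2_sq, Finsupp.sum, Finsupp.sum]
  exact sum_le_sum fun v _ => by split_ifs <;> [exact le_rfl; positivity]

lemma sum_norm_toL2_filter_sq_le {ι : Type*} [Fintype ι] (Y : ι → Set V)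
    (hY : Pairwise fun i j => Disjoint (Y i) (Y j)) [∀ i, DecidablePred (· ∈ Y i)]
    (f : V →₀ ℝ) : ∑ i, ‖toL2 (f.filter (· ∈ Y i))‖ ^ 2 ≤ ‖toL2 f‖ ^ 2 := by
  classical
  simp only [norm_toL2_filter_sq]
  rw [norm_toL2_sq]
  simp only [Finsupp.sum]
  rw [sum_comm]
  refine sum_le_sum fun v _ => ?_
  rw [← sum_filter, sum_const, nsmul_eq_mul]
  have hcard : #{i | v ∈ Y i} ≤ 1 := card_le_one.2 fun i hi j hj => by
    by_contra hij
    exact Set.disjoint_left.1 (hY hij) (mem_filter.1 hi).2 (mem_filter.1 hj).2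
  exact mul_le_of_le_one_left (sq_nonneg _) (by exact_mod_cast hcard)

variable {Γ : Type*} [Group Γ] [MulAction Γ V]

lemma inner_toL2_translate (g : Γ) (f f' : V →₀ ℝ) :
    ⟪toL2 (translate g f), toL2 (translate g f')⟫_ℝ = ⟪toL2 f, toL2 f'⟫_ℝ := by
  simp only [inner_toL2, sum_translate, translate_apply, inv_smul_smul]

lemma norm_toL2_translate (g : Γ) (f : V →₀ ℝ) : ‖toL2 (translate g f)‖ = ‖toL2 f‖ := by
  rw [norm_eq_sqrt_real_inner, norm_eq_sqrt_real_inner, inner_toL2_translate]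

lemma inner_toL2_translate_left (g : Γ) (f f' : V →₀ ℝ) :
    ⟪toL2 (translate g f), toL2 f'⟫_ℝ = ⟪toL2 f, toL2 (translate g⁻¹ f')⟫_ℝ := by
  rw [← inner_toL2_translate g⁻¹, ← Module.End.mul_apply, ← map_mul, inv_mul_cancel, map_one,
    Module.End.one_apply]

lemma exists_norm_toL2_translate_sub_le {β : Type*} [Fintype β] (s : β → Γ) {g : Γ}
    (hg : g ∈ Submonoid.closure (Set.range s)) : ∃ R : ℝ, ∀ f : V →₀ ℝ,
      ‖toL2 (translate g f - f)‖ ≤ R * √(∑ b, ‖toL2 (translate (s b) f - f)‖ ^ 2) := by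
  induction hg using Submonoid.closure_induction with
  | mem g hg =>
    obtain ⟨b, rfl⟩ := hg
    refine ⟨1, fun f => ?_⟩
    rw [one_mul, Real.le_sqrt (norm_nonneg _) (by positivity)]
    exact single_le_sum (f := fun b => ‖toL2 (translate (s b) f - f)‖ ^ 2)
      (fun b _ => by positivity) (mem_univ b)
  | one => exact ⟨0, fun f => by simp⟩
  | mul g h _ _ hg hh =>
    obtain ⟨R₁, h₁⟩ := hg
    obtain ⟨R₂, h₂⟩ := hh
    refine ⟨R₁ + R₂, fun f => ?_⟩
    have hsplit : translate (g * h) f - f =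
        translate g (translate h f - f) + (translate g f - f) := by
      rw [map_mul, Module.End.mul_apply, map_sub]; abel
    rw [hsplit, map_add, add_mul, add_comm (R₁ * _)]
    refine (norm_add_le _ _).trans ?_
    rw [norm_toL2_translate]
    exact add_le_add (h₂ f) (h₁ f)

lemma sum_norm_toL2_translate_sub_sq {β : Type*} [Fintype β] (s : β → Γ) (f : V →₀ ℝ) :
    ∑ b, ‖toL2 (translate (s b) f - f)‖ ^ 2 =
      2 * (Fintype.card β * ‖toL2 f‖ ^ 2 - ⟪toL2 f, toL2 (markov s f)⟫_ℝ) := by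
  simp only [map_sub, norm_sub_sq_real, norm_toL2_translate, markov_apply, map_sum, inner_sum,
    sum_add_distrib, sum_sub_distrib, sum_const, card_univ, nsmul_eq_mul,
    real_inner_comm (toL2 f), ← mul_sum]
  ring

end L2

section PingPong

variable {V Γ : Type*} [DecidableEq V] [Group Γ] [MulAction Γ V]

lemma norm_toL2_sq_le_of_forall_notMem {Y Y' : Set V} [DecidablePred (· ∈ Y)]
    [DecidablePred (· ∈ Y')] {g : Γ} (hg : ∀ v ∉ Y', g • v ∈ Y) (f : V →₀ ℝ) :
    ‖toL2 f‖ ^ 2 ≤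
      ‖toL2 (f.filter (· ∈ Y'))‖ ^ 2 + ‖toL2 ((translate g f).filter (· ∈ Y))‖ ^ 2 := by
  rw [norm_toL2_filter_sq, norm_toL2_filter_sq, sum_translate, norm_toL2_sq, ← Finsupp.sum_add,
    Finsupp.sum, Finsupp.sum]
  refine sum_le_sum fun v _ => ?_
  by_cases hv : v ∈ Y'
  · simp only [hv, if_true, le_add_iff_nonneg_right]
    split_ifs <;> positivity
  · simp [hv, hg v hv]

lemma norm_toL2_filter_sq_sub_le (f f' : V →₀ ℝ) (p : V → Prop) [DecidablePred p] :
    ‖toL2 (f.filter p)‖ ^ 2 - ‖toL2 (f'.filter p)‖ ^ 2 ≤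
      ‖toL2 (f - f')‖ * (‖toL2 f‖ + ‖toL2 f'‖) := by
  have hdiff : ‖toL2 (f.filter p)‖ - ‖toL2 (f'.filter p)‖ ≤ ‖toL2 (f - f')‖ := by
    refine (norm_sub_norm_le _ _).trans ?_
    rw [← map_sub, ← Finsupp.filter_sub]
    exact norm_toL2_filter_le _ p
  calc ‖toL2 (f.filter p)‖ ^ 2 - ‖toL2 (f'.filter p)‖ ^ 2
      = (‖toL2 (f.filter p)‖ - ‖toL2 (f'.filter p)‖) *
          (‖toL2 (f.filter p)‖ + ‖toL2 (f'.filter p)‖) := by ring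
    _ ≤ ‖toL2 (f - f')‖ * (‖toL2 f‖ + ‖toL2 f'‖) :=
      mul_le_mul hdiff (add_le_add (norm_toL2_filter_le f p) (norm_toL2_filter_le f' p))
        (by positivity) (norm_nonneg _)

/-- `p` moves the mass of `f` off `Y 1` into `Y 0`, and `q` moves it off `Y 3` into `Y 2`; as the
four sets are disjoint, `f` cannot be almost invariant under both. -/
lemma norm_toL2_le_of_pingPong (Y : Fin 4 → Set V) (hY : Pairwise fun i j => Disjoint (Y i) (Y j))
    {p q : Γ} (hp : ∀ v ∉ Y 1, p • v ∈ Y 0) (hq : ∀ v ∉ Y 3, q • v ∈ Y 2) (f : V →₀ ℝ) :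
    ‖toL2 f‖ ≤ 2 * (‖toL2 (translate p f - f)‖ + ‖toL2 (translate q f - f)‖) := by
  classical
  have hp₁ := norm_toL2_sq_le_of_forall_notMem hp f
  have hq₁ := norm_toL2_sq_le_of_forall_notMem hq f
  have hp₂ := norm_toL2_filter_sq_sub_le (translate p f) f (· ∈ Y 0)
  have hq₂ := norm_toL2_filter_sq_sub_le (translate q f) f (· ∈ Y 2)
  have hsum := sum_norm_toL2_filter_sq_le Y hY f
  rw [Fin.sum_univ_four] at hsum
  rw [norm_toL2_translate] at hp₂ hq₂
  have hN := norm_nonneg (toL2 f)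
  have hdp := norm_nonneg (toL2 (translate p f - f))
  have hdq := norm_nonneg (toL2 (translate q f - f))
  nlinarith

lemma exists_inner_toL2_markov_le {β : Type*} [Fintype β] (s : β → Γ) (Y : Fin 4 → Set V)
    (hY : Pairwise fun i j => Disjoint (Y i) (Y j)) {p q : Γ} (hp : ∀ v ∉ Y 1, p • v ∈ Y 0)
    (hq : ∀ v ∉ Y 3, q • v ∈ Y 2) (hpS : p ∈ Submonoid.closure (Set.range s))
    (hqS : q ∈ Submonoid.closure (Set.range s)) :
    ∃ ε > 0, ∀ f : V →₀ ℝ,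
      ⟪toL2 f, toL2 (markov s f)⟫_ℝ ≤ (Fintype.card β - ε) * ‖toL2 f‖ ^ 2 := by
  obtain ⟨Rp, hRp⟩ := exists_norm_toL2_translate_sub_le (V := V) s hpS
  obtain ⟨Rq, hRq⟩ := exists_norm_toL2_translate_sub_le (V := V) s hqS
  set C := 4 * (Rp + Rq) ^ 2 + 1
  have hC : 0 < C := by positivity
  refine ⟨1 / (2 * C), by positivity, fun f => ?_⟩
  set D := ∑ b, ‖toL2 (translate (s b) f - f)‖ ^ 2
  have hD : 0 ≤ D := by positivity
  have hN : ‖toL2 f‖ ≤ 2 * (Rp + Rq) * √D := by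
    linarith [norm_toL2_le_of_pingPong Y hY hp hq f, hRp f, hRq f]
  have hN2 : ‖toL2 f‖ ^ 2 ≤ C * D := by
    calc ‖toL2 f‖ ^ 2 ≤ (2 * (Rp + Rq) * √D) ^ 2 := pow_le_pow_left₀ (norm_nonneg _) hN 2
      _ = 4 * (Rp + Rq) ^ 2 * D := by rw [mul_pow, Real.sq_sqrt hD]; ring
      _ ≤ C * D := by nlinarith
  rw [show D = _ from sum_norm_toL2_translate_sub_sq s f] at hN2
  have hgap : ‖toL2 f‖ ^ 2 / (2 * C) ≤
      Fintype.card β * ‖toL2 f‖ ^ 2 - ⟪toL2 f, toL2 (markov s f)⟫_ℝ := by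
    rw [div_le_iff₀ (by positivity)]
    linarith
  linarith [show (Fintype.card β - 1 / (2 * C)) * ‖toL2 f‖ ^ 2 =
    Fintype.card β * ‖toL2 f‖ ^ 2 - ‖toL2 f‖ ^ 2 / (2 * C) by ring]

variable {α : Type*} [Fintype α] {η : α → Γ} {inv : α → α}

lemma inner_toL2_markov_comm (hη : IsSymmetricGen η inv) (f f' : V →₀ ℝ) :
    ⟪toL2 (markov η f), toL2 f'⟫_ℝ = ⟪toL2 f, toL2 (markov η f')⟫_ℝ := by
  simp only [markov_apply, map_sum, sum_inner, inner_sum, inner_toL2_translate_left]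
  rw [← Equiv.sum_comp (Function.Involutive.toPerm inv (IsSymmetricGen.involutive hη))]
  simp [IsSymmetricGen.apply_inv hη]

/-- Spectral gap: the pairs `(a, b)` give the operator `markov η ^ 2`, whose Rayleigh quotient
is bounded away from `|α| ^ 2` by the ping-pong estimate applied to `p ^ 2` and `q ^ 2`. -/
lemma exists_norm_toL2_markov_le [Nonempty α] (hη : IsSymmetricGen η inv) (Y : Fin 4 → Set V)
    (hY : Pairwise fun i j => Disjoint (Y i) (Y j)) {p q : Γ} (hp : ∀ v ∉ Y 1, p • v ∈ Y 0)
    (hq : ∀ v ∉ Y 3, q • v ∈ Y 2) :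
    ∃ r : ℝ, 0 ≤ r ∧ r < Fintype.card α ∧ ∀ f : V →₀ ℝ, ‖toL2 (markov η f)‖ ≤ r * ‖toL2 f‖ := by
  have hsq : ∀ {g : Γ} {i j : Fin 4}, i ≠ j → (∀ v ∉ Y j, g • v ∈ Y i) →
      (∀ v ∉ Y j, (g * g) • v ∈ Y i) ∧
        g * g ∈ Submonoid.closure (Set.range fun ab : α × α => η ab.1 * η ab.2) := by
    intro g i j hij hg
    refine ⟨fun v hv => ?_, ?_⟩
    · rw [mul_smul]
      exact hg _ (Set.disjoint_left.1 (hY hij) (hg v hv))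
    · obtain ⟨w, rfl⟩ := IsSymmetricGen.exists_evalWord_eq hη g
      rw [← evalWord_append]
      exact evalWord_mem_closure_mulPairs η _ (by simp)
  obtain ⟨hp₂, hpS⟩ := hsq (by decide) hp
  obtain ⟨hq₂, hqS⟩ := hsq (by decide) hq
  obtain ⟨ε, hε, hM⟩ := exists_inner_toL2_markov_le _ Y hY hp₂ hq₂ hpS hqS
  have hk : (0 : ℝ) < Fintype.card α := by exact_mod_cast Fintype.card_pos
  refine ⟨√(Fintype.card α ^ 2 - ε), Real.sqrt_nonneg _, ?_, fun f => ?_⟩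
  · rw [Real.sqrt_lt' hk]
    linarith
  have hf := hM f
  rw [← markov_mul_self, Module.End.mul_apply, ← inner_toL2_markov_comm hη,
    real_inner_self_eq_norm_sq, Fintype.card_prod, Nat.cast_mul, ← sq] at hf
  calc ‖toL2 (markov η f)‖ = √(‖toL2 (markov η f)‖ ^ 2) := (Real.sqrt_sq (norm_nonneg _)).symm
    _ ≤ √((Fintype.card α ^ 2 - ε) * ‖toL2 f‖ ^ 2) := Real.sqrt_le_sqrt hf
    _ = √(Fintype.card α ^ 2 - ε) * ‖toL2 f‖ := by
      rw [Real.sqrt_mul' _ (sq_nonneg _), Real.sqrt_sq (norm_nonneg _)]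

lemma stronglyNegligible_of_wordCount_le_pow (L : Set (List α)) {r : ℝ} (hr0 : 0 ≤ r)
    (hrk : r < Fintype.card α) (h : ∀ n, (wordCount L n : ℝ) ≤ r ^ n) : StronglyNegligible L := by
  have hk : (0 : ℝ) < Fintype.card α := hr0.trans_lt hrk
  refine ⟨1, (r + Fintype.card α) / (2 * Fintype.card α), one_pos, by positivity,
    by rw [div_lt_one (by positivity)]; linarith, fun n => ?_⟩
  rw [one_mul, ← mul_pow]
  refine (h n).trans (pow_le_pow_left₀ hr0 ?_ n)
  rw [div_mul_eq_mul_div, le_div_iff₀ (by positivity)]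
  nlinarith

theorem stronglyNegligible_of_pingPong [Nonempty α] (hη : IsSymmetricGen η inv)
    (Y : Fin 4 → Set V) (hY : Pairwise fun i j => Disjoint (Y i) (Y j)) {p q : Γ}
    (hp : ∀ v ∉ Y 1, p • v ∈ Y 0) (hq : ∀ v ∉ Y 3, q • v ∈ Y 2) (o : V) :
    StronglyNegligible {w : List α | evalWord η w • o = o} := by
  classical
  obtain ⟨r, hr0, hrk, hr⟩ := exists_norm_toL2_markov_le hη Y hY hp hq
  refine stronglyNegligible_of_wordCount_le_pow _ hr0 hrk fun n => ?_
  have hcount : (wordCount {w : List α | evalWord η w • o = o} n : ℝ) =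
      ⟪toL2 (Finsupp.single o 1), toL2 ((markov η ^ n) (Finsupp.single o 1))⟫_ℝ := by
    rw [inner_toL2, Finsupp.sum_single_index (by simp), one_mul, markov_pow_apply_single,
      Finsupp.finsetSum_apply, wordCount_eq_card_filter]
    simp [Finsupp.single_apply]
  rw [hcount]
  refine (real_inner_le_norm _ _).trans ?_
  rw [norm_toL2_single, one_mul]
  clear hcount
  induction n with
  | zero => simp [norm_toL2_single]
  | succ n ih =>
    rw [pow_succ', Module.End.mul_apply, pow_succ']
    exact (hr _).trans (mul_le_mul_of_nonneg_left ih hr0)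

end PingPong

end Cogrowth

lemma Subgroup.exists_notMem_and_notMem {H : Type*} [Group H] {A B : Subgroup H} (hA : A ≠ ⊤)
    (hB : B ≠ ⊤) : ∃ c, c ∉ A ∧ c ∉ B := by
  obtain ⟨a, ha⟩ : ∃ a, a ∉ A := by
    by_contra! h
    exact hA ((eq_top_iff' A).2 h)
  obtain ⟨b, hb⟩ : ∃ b, b ∉ B := by
    by_contra! h
    exact hB ((eq_top_iff' B).2 h)
  by_cases haB : a ∈ B
  · by_cases hbA : b ∈ A
    · exact ⟨a * b, fun h => ha ((A.mul_mem_cancel_right hbA).1 h),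
        fun h => hb ((B.mul_mem_cancel_left haB).1 h)⟩
    · exact ⟨b, hbA, hb⟩
  · exact ⟨a, ha, haB⟩

namespace HNNExtension

open Cogrowth NormalWord

variable {H : Type*} [Group H] {A B : Subgroup H} {φ : A ≃* B}

variable (φ) in
noncomputable def expSum : HNNExtension H A B φ →* Multiplicative ℤ :=
  lift 1 (Multiplicative.ofAdd 1) fun _ => by simp

@[simp] lemma expSum_of (h : H) : expSum φ (of h) = 1 := by simp [expSum]

@[simp] lemma expSum_t : expSum φ t = Multiplicative.ofAdd 1 := by simp [expSum]

lemma t_ne_one : (t : HNNExtension H A B φ) ≠ 1 := fun h => by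
  simpa using congrArg (expSum φ) h

instance : Nontrivial (HNNExtension H A B φ) := ⟨⟨t, 1, t_ne_one⟩⟩

lemma of_mem_eventuallyConjInto {χ : HNNExtension H A B φ →* Multiplicative ℤ}
    {τ : HNNExtension H A B φ} (hχ : ∀ h, χ (of h) = 1)
    (hτ : ∀ h, τ * of h * τ⁻¹ ∈ (of : H →* HNNExtension H A B φ).range) (h : H) :
    of h ∈ eventuallyConjInto (of : H →* HNNExtension H A B φ).range χ τ := by
  have hpow : ∀ (N : ℕ) (h : H), τ ^ N * of h * (τ ^ N)⁻¹ ∈ (of : H →* _).range := by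
    intro N
    induction N with
    | zero => intro h; simp
    | succ N ih =>
      intro h
      obtain ⟨h', hh'⟩ := hτ h
      convert ih h' using 1
      rw [hh']
      group
  refine ⟨0, fun n hn => ?_⟩
  lift n to ℕ using hn
  rw [hχ, toAdd_one, add_zero, zpow_natCast, zpow_neg, zpow_natCast]
  exact hpow n h

lemma eventuallyConjInto_eq_top {χ : HNNExtension H A B φ →* Multiplicative ℤ}
    {τ : HNNExtension H A B φ} (hτt : τ = t ∨ τ = t⁻¹) (hχ : ∀ h, χ (of h) = 1)
    (hχτ : χ τ = Multiplicative.ofAdd 1)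
    (hτ : ∀ h, τ * of h * τ⁻¹ ∈ (of : H →* HNNExtension H A B φ).range) :
    eventuallyConjInto (of : H →* HNNExtension H A B φ).range χ τ = ⊤ := by
  refine (Subgroup.eq_top_iff' _).2 fun g => ?_
  induction g using induction_on with
  | of h => exact of_mem_eventuallyConjInto hχ hτ h
  | t =>
    have hmem := self_mem_eventuallyConjInto (of : H →* HNNExtension H A B φ).range hχτ
    rcases hτt with rfl | rfl
    · exact hmem
    · simpa using inv_mem hmem
  | mul x y hx hy => exact mul_mem hx hy
  | inv x hx => exact inv_mem hx

theorem not_stronglyNegligible_of_eq_top {α : Type*} [Fintype α] {η : α → HNNExtension H A B φ}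
    {inv : α → α} (hη : IsSymmetricGen η inv) (hAB : A = ⊤ ∨ B = ⊤) :
    ¬ StronglyNegligible {w : List α | evalWord η w ∈ (of : H →* HNNExtension H A B φ).range} := by
  have := IsSymmetricGen.nonempty hη
  rcases hAB with rfl | rfl
  · refine not_stronglyNegligible_of_eventuallyConjInto_eq_top hη (χ := expSum φ) (τ := t) ?_
    exact eventuallyConjInto_eq_top (Or.inl rfl) expSum_of expSum_t
      fun h => ⟨_, equiv_eq_conj ⟨h, Subgroup.mem_top h⟩⟩
  · refine not_stronglyNegligible_of_eventuallyConjInto_eq_top hη (χ := (expSum φ)⁻¹) (τ := t⁻¹) ?_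
    refine eventuallyConjInto_eq_top (Or.inr rfl) (by simp) (by simp)
      fun h => ⟨_, (equiv_symm_eq_conj ⟨h, Subgroup.mem_top h⟩).trans (by rw [inv_inv])⟩

lemma exists_reducedWord_prod_eq (g : HNNExtension H A B φ) :
    ∃ w : ReducedWord H A B, w.prod φ = g := by
  obtain ⟨d⟩ := TransversalPair.nonempty H A B
  exact ⟨(NormalWord.equiv φ d g).toReducedWord, (NormalWord.equiv φ d).symm_apply_apply g⟩

lemma exists_reducedWord_prod_mul_of (w : ReducedWord H A B) (h : H) :
    ∃ w' : ReducedWord H A B, w'.prod φ = w.prod φ * of h ∧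
      w'.toList.map Prod.fst = w.toList.map Prod.fst ∧ (w.toList ≠ [] → w'.head = w.head) := by
  rcases List.eq_nil_or_concat w.toList with hl | ⟨l, ⟨u, g⟩, hl⟩
  · refine ⟨⟨w.head * h, [], List.isChain_nil⟩, ?_, by simp [hl], by simp [hl]⟩
    simp [ReducedWord.prod, hl]
  · have hchain := w.chain
    rw [hl, List.concat_eq_append, List.isChain_append] at hchain
    refine ⟨⟨w.head, l ++ [(u, g * h)], List.isChain_append.2 ⟨hchain.1, List.isChain_singleton _,
      fun a ha b hb => ?_⟩⟩, ?_, by simp [hl], fun _ => rfl⟩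
    · rw [List.head?_cons, Option.mem_some_iff] at hb
      subst hb
      exact hchain.2.2 a ha (u, g) (by simp)
    · simp only [ReducedWord.prod, hl, List.concat_eq_append, List.map_append, List.map_cons,
        List.map_nil, List.prod_append, List.prod_cons, List.prod_nil, map_mul]
      group

/-- `g` has a reduced form `x a t ^ u ⋯` with `a ∈ toSubgroup A B (-u)`. By Britton's lemma,
the pair `(u, x • toSubgroup A B (-u))` depends only on the coset `g • of.range`. -/
def StartsWith (x : H) (u : ℤˣ) (g : HNNExtension H A B φ) : Prop :=
  ∃ w : ReducedWord H A B, w.prod φ = g ∧ w.toList.head?.map Prod.fst = some u ∧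
    x⁻¹ * w.head ∈ toSubgroup A B (-u)

lemma StartsWith.eq_and_mem_of_mul_of {x x' : H} {u u' : ℤˣ} {g : HNNExtension H A B φ}
    (hg : StartsWith x u g) {h : H} (hg' : StartsWith x' u' (g * of h)) :
    u = u' ∧ x⁻¹ * x' ∈ toSubgroup A B (-u) := by
  obtain ⟨w, rfl, hwu, hwx⟩ := hg
  obtain ⟨w', hw', hwu', hwx'⟩ := hg'
  obtain ⟨w₂, hw₂, hmap, hhead⟩ := exists_reducedWord_prod_mul_of w h
  have hne : w.toList ≠ [] := fun hnil => by simp [hnil] at hwu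
  obtain ⟨hfst, hcoset⟩ := ReducedWord.map_fst_eq_and_of_prod_eq φ (hw₂.trans hw'.symm)
  have hu₂ : w₂.toList.head?.map Prod.fst = some u := by
    rw [← List.head?_map, hmap, List.head?_map, hwu]
  have huu : u = u' := by
    rw [← List.head?_map, hfst, List.head?_map, hwu'] at hu₂
    exact (Option.some_inj.1 hu₂).symm
  subst huu
  have hmid := hcoset u (by rw [hu₂]; rfl)
  rw [hhead hne] at hmid
  refine ⟨rfl, ?_⟩
  convert mul_mem (mul_mem hwx hmid) (inv_mem hwx') using 1
  group

lemma startsWith_of_mul_t_zpow_mul {x : H} {u : ℤˣ} {g : HNNExtension H A B φ}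
    (hg : ¬ StartsWith x (-u) g) : StartsWith x u (of x * t ^ (u : ℤ) * of x⁻¹ * g) := by
  obtain ⟨w, hw⟩ := exists_reducedWord_prod_eq (of x⁻¹ * g)
  have hprod : w.prod φ = of w.head * (w.toList.map fun a => t ^ (a.1 : ℤ) * of a.2).prod := rfl
  refine ⟨⟨x, (u, w.head) :: w.toList, List.isChain_cons.2 ⟨fun y hy hmem => ?_, w.chain⟩⟩,
    ?_, by simp, by simp⟩
  · by_contra hne
    refine hg ⟨⟨x * w.head, w.toList, w.chain⟩, ?_, ?_, by simpa using hmem⟩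
    · simp only [ReducedWord.prod, map_mul, mul_assoc]
      rw [← hprod, hw, ← mul_assoc, ← map_mul, mul_inv_cancel, map_one, one_mul]
    · change w.toList.head?.map Prod.fst = some (-u)
      rw [Option.mem_def.1 hy, Option.map_some, Int.units_ne_iff_eq_neg.1 (Ne.symm hne)]
  · simp only [ReducedWord.prod, List.map_cons, List.prod_cons]
    rw [mul_assoc (t ^ _), ← hprod, hw]
    group

variable (φ) in
def pingPongSet (x : H) (u : ℤˣ) :
    Set (HNNExtension H A B φ ⧸ (of : H →* HNNExtension H A B φ).range) :=
  QuotientGroup.mk '' {g : HNNExtension H A B φ | StartsWith x u g}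

lemma disjoint_pingPongSet {x x' : H} {u u' : ℤˣ}
    (h : u = u' → x⁻¹ * x' ∉ toSubgroup A B (-u)) :
    Disjoint (pingPongSet φ x u) (pingPongSet φ x' u') := by
  refine Set.disjoint_left.2 ?_
  rintro _ ⟨g, hg, rfl⟩ ⟨g', hg', heq⟩
  obtain ⟨k, hk⟩ := QuotientGroup.eq.1 heq
  rw [eq_inv_mul_iff_mul_eq] at hk
  obtain ⟨huu, hmem⟩ := StartsWith.eq_and_mem_of_mul_of hg' (hk ▸ hg)
  subst huu
  exact h rfl (by simpa using inv_mem hmem)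

lemma smul_mem_pingPongSet {x : H} {u : ℤˣ} {v : HNNExtension H A B φ ⧸ (of : H →* _).range}
    (hv : v ∉ pingPongSet φ x (-u)) :
    (of x * t ^ (u : ℤ) * of x⁻¹ : HNNExtension H A B φ) • v ∈ pingPongSet φ x u := by
  obtain ⟨g, rfl⟩ := QuotientGroup.mk_surjective v
  exact ⟨_, startsWith_of_mul_t_zpow_mul fun hg => hv ⟨g, hg, rfl⟩,
    by rw [MulAction.Quotient.smul_mk, smul_eq_mul]⟩

theorem stronglyNegligible_of_ne_top {α : Type*} [Fintype α] {η : α → HNNExtension H A B φ}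
    {inv : α → α} (hη : IsSymmetricGen η inv) (hA : A ≠ ⊤) (hB : B ≠ ⊤) :
    StronglyNegligible {w : List α | evalWord η w ∈ (of : H →* HNNExtension H A B φ).range} := by
  classical
  have := IsSymmetricGen.nonempty hη
  obtain ⟨c, hcA, hcB⟩ := Subgroup.exists_notMem_and_notMem hA hB
  set o : HNNExtension H A B φ ⧸ (of : H →* HNNExtension H A B φ).range := QuotientGroup.mk 1
  have hsets : {w : List α | evalWord η w ∈ (of : H →* HNNExtension H A B φ).range} =
      {w | evalWord η w • o = o} := by
    ext w
    change _ ∈ _ ↔ _ = _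
    rw [MulAction.Quotient.smul_mk, QuotientGroup.eq]
    simp
  rw [hsets]
  refine stronglyNegligible_of_pingPong hη
    ![pingPongSet φ 1 1, pingPongSet φ 1 (-1), pingPongSet φ c 1, pingPongSet φ c (-1)]
    ?_ (p := t) (q := of c * t * of c⁻¹) (fun v hv => ?_) (fun v hv => ?_) o
  · intro i j hij
    fin_cases i <;> fin_cases j <;> first | exact absurd rfl hij | skip
    all_goals apply disjoint_pingPongSet; simp [hcA, hcB]
  · simpa using smul_mem_pingPongSet (x := 1) (u := 1) hv
  · simpa using smul_mem_pingPongSet (x := c) (u := 1) hv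

end HNNExtension

/-- For an HNN extension `G = ⟨H, t | t a t⁻¹ = φ(a), a ∈ A⟩` with
associated subgroups `A, B ≤ H`, and a finite symmetric generating set `η : Σ → G`,
the set of words representing an element of the canonical image of `H` is strongly
negligible iff both `[H:A] ≥ 2` and `[H:B] ≥ 2`. -/
theorem stmt_1 {H : Type*} [Group H] (A B : Subgroup H) (φ : A ≃* B)
    {α : Type*} [Fintype α] (η : α → HNNExtension H A B φ) (inv : α → α)
    (hsym : IsSymmetricGen η inv) :
    StronglyNegligible {w : List α |
        evalWord η w ∈ (HNNExtension.of : H →* HNNExtension H A B φ).range} ↔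
      (2 ≤ Cardinal.mk (H ⧸ A) ∧ 2 ≤ Cardinal.mk (H ⧸ B)) := by
  simp only [Cardinal.two_le_iff_one_lt, Cardinal.one_lt_iff_nontrivial,
    QuotientGroup.nontrivial_iff]
  refine ⟨fun h => ?_, fun h => HNNExtension.stronglyNegligible_of_ne_top hsym h.1 h.2⟩
  by_contra hAB
  rw [← not_or, not_not] at hAB
  exact HNNExtension.not_stronglyNegligible_of_eq_top hsym hAB h
end

section
/- Let G = ⟨H, t | t a t⁻¹ = φ(a) for a ∈ A⟩ be an HNN extension with associated subgroups A, B ≤ H and isomorphism φ : A → B. Let C ⊆ H with 1 ∈ C be such that every element of H factors uniquely as an element of A times an element of C, and let D ⊆ H with 1 ∈ D be such that every element of H factors uniquely as an element of B times an element of D. Then every g ∈ G can be written in exactly one way as g = x₀·t^{ε₁}·x₁·⋯·t^{ε_k}·x_k with k ∈ ℕ, x₀ ∈ H, and for all 1 ≤ i ≤ k: εᵢ ∈ {+1, −1}; if εᵢ = 1 then xᵢ ∈ C; if εᵢ = −1 then xᵢ ∈ D; and if i < k and εᵢ = −ε_{i+1} then xᵢ ≠ 1. -/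
universe u

open Monoid

/-!
Mathlib's `HNNExtension.NormalWord.equiv` identifies the HNN extension with normal words
`(x₀, [(u₁, x₁), …])`, `uᵢ ∈ ℤˣ`, for any choice of right transversals of `A` (for `u = 1`) and
`B` (for `u = -1`). Choosing `C` and `D`, these are exactly the sequences of the theorem: the
reduction condition of a normal word forbids `t^u x t^-u` with `x ∈ toSubgroup A B u`, and since
`C ∩ A = D ∩ B = {1}`, this says precisely that no `t^ε 1 t^-ε` occurs.
-/

namespace Subgroup

variable {G : Type*} [Group G] {S T : Set G}

theorem isComplement_of_existsUnique_mul
    (h : ∀ g : G, ∃! p : G × G, p.1 ∈ S ∧ p.2 ∈ T ∧ g = p.1 * p.2) : IsComplement S T := by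
  refine ⟨fun x y hxy => ?_, fun g => ?_⟩
  · obtain ⟨_, -, hu⟩ := h (x.1 * x.2)
    have hx := hu (x.1, x.2) ⟨x.1.2, x.2.2, rfl⟩
    have hy := hu (y.1, y.2) ⟨y.1.2, y.2.2, hxy⟩
    rw [← hy, Prod.mk.injEq] at hx
    exact Prod.ext (Subtype.ext hx.1) (Subtype.ext hx.2)
  · obtain ⟨p, ⟨hp₁, hp₂, rfl⟩, -⟩ := h g
    exact ⟨(⟨p.1, hp₁⟩, ⟨p.2, hp₂⟩), rfl⟩

theorem IsComplement.eq_one_of_mem_of_mem (h : IsComplement S T) (h1S : 1 ∈ S) (h1T : 1 ∈ T)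
    {g : G} (hgS : g ∈ S) (hgT : g ∈ T) : g = 1 := by
  have := @h.1 (⟨g, hgS⟩, ⟨1, h1T⟩) (⟨1, h1S⟩, ⟨g, hgT⟩) (by simp)
  exact congrArg (fun p => (p.1 : G)) this

end Subgroup

namespace HNNExtension

open NormalWord

variable {H : Type*} [Group H] {A B : Subgroup H} {φ : A ≃* B}

def TransversalPair.ofComplements {C D : Set H} (hC : Subgroup.IsComplement (A : Set H) C)
    (hD : Subgroup.IsComplement (B : Set H) D) : TransversalPair H A B where
  set u := if u = 1 then C else D
  compl u := by
    rcases Int.units_eq_one_or u with rfl | rfl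
    · exact hC
    · exact hD

theorem TransversalPair.mem_ofComplements_set_iff {C D : Set H}
    (hC : Subgroup.IsComplement (A : Set H) C) (hD : Subgroup.IsComplement (B : Set H) D)
    (u : ℤˣ) (x : H) :
    x ∈ (ofComplements hC hD).set u ↔ ((u : ℤ) = 1 → x ∈ C) ∧ ((u : ℤ) = -1 → x ∈ D) := by
  rcases Int.units_eq_one_or u with rfl | rfl <;> simp [ofComplements]

namespace NormalWord

variable {d : TransversalPair H A B}

theorem isChain_neg_imp_ne_one (w : NormalWord d) :
    w.toList.IsChain (fun a b => a.1 = -b.1 → a.2 ≠ 1) := by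
  refine w.chain.imp fun a b hab hneg h1 => ?_
  rw [← Int.units_ne_iff_eq_neg] at hneg
  exact hneg (hab (h1 ▸ Subgroup.one_mem _))

def ofList (h1 : ∀ u, 1 ∈ d.set u) (head : H) (l : List (ℤˣ × H))
    (hmem : ∀ q ∈ l, q.2 ∈ d.set q.1) (hchain : l.IsChain (fun a b => a.1 = -b.1 → a.2 ≠ 1)) :
    NormalWord d where
  head := head
  toList := l
  chain := hchain.imp_of_mem_imp fun a b ha _ hab hsub => by
    by_contra hne
    exact hab (Int.units_ne_iff_eq_neg.1 hne)
      ((d.compl a.1).eq_one_of_mem_of_mem (Subgroup.one_mem _) (h1 a.1) hsub (hmem a ha))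
  mem_set u x hx := hmem (u, x) hx

def toIntList (w : NormalWord d) : List (ℤ × H) :=
  w.toList.map (Prod.map Units.val id)

theorem of_head_mul_prod_toIntList (w : NormalWord d) :
    of w.head * ((toIntList w).map fun q : ℤ × H => (t : HNNExtension H A B φ) ^ q.1 * of q.2).prod
      = w.prod φ := by
  simp only [toIntList, List.map_map]
  rfl

theorem exists_toIntList_eq_iff {C D : Set H} (hC : Subgroup.IsComplement (A : Set H) C)
    (hD : Subgroup.IsComplement (B : Set H) D) (h1C : (1 : H) ∈ C) (h1D : (1 : H) ∈ D) (h₀ : H)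
    (l : List (ℤ × H)) :
    (∃ w : NormalWord (TransversalPair.ofComplements hC hD), w.head = h₀ ∧ toIntList w = l) ↔
      (∀ q ∈ l, (q.1 = 1 ∨ q.1 = -1) ∧ (q.1 = 1 → q.2 ∈ C) ∧ (q.1 = -1 → q.2 ∈ D)) ∧
        l.IsChain (fun q q' : ℤ × H => q.1 = -q'.1 → q.2 ≠ 1) := by
  constructor
  · rintro ⟨w, -, rfl⟩
    refine ⟨fun q hq => ?_, ?_⟩
    · obtain ⟨⟨u, x⟩, hux, rfl⟩ := List.mem_map.1 hq
      exact ⟨Int.isUnit_iff.1 u.isUnit,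
        (TransversalPair.mem_ofComplements_set_iff hC hD u x).1 (w.mem_set u x hux)⟩
    · rw [toIntList, List.isChain_map]
      refine w.isChain_neg_imp_ne_one.imp fun a b hab hneg => hab ?_
      exact Units.ext (by simpa using hneg)
  · rintro ⟨hmem, hchain⟩
    choose! sign hsign using fun q hq => Int.isUnit_iff.2 (hmem q hq).1
    have hlift : (l.map fun q => (sign q, q.2)).map (Prod.map Units.val id) = l := by
      rw [List.map_map]
      exact (List.map_congr_left fun q hq => by simp [hsign q hq]).trans (List.map_id l)
    have h1 (u : ℤˣ) : 1 ∈ (TransversalPair.ofComplements hC hD).set u :=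
      (TransversalPair.mem_ofComplements_set_iff hC hD u 1).2 ⟨fun _ => h1C, fun _ => h1D⟩
    refine ⟨ofList h1 h₀ (l.map fun q => (sign q, q.2)) ?_ ?_, rfl, hlift⟩
    · simp only [List.mem_map, forall_exists_index, and_imp]
      rintro _ q hq rfl
      exact (TransversalPair.mem_ofComplements_set_iff hC hD _ _).2
        (by simpa [hsign q hq] using (hmem q hq).2)
    · rw [List.isChain_map]
      refine hchain.imp_of_mem_imp fun a b ha hb hab hneg => hab ?_
      simpa [hsign a ha, hsign b hb] using congrArg Units.val hneg

end NormalWord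

end HNNExtension

open HNNExtension NormalWord in
/-- Normal form in an HNN extension `G = ⟨H, t | t a t⁻¹ = φ(a), a ∈ A⟩`:
given transversals `C` of `A` in `H` and `D` of `B` in `H` (both containing `1`), every
`g ∈ G` is uniquely of the form `g = x₀ t^{ε₁} x₁ ⋯ t^{ε_k} x_k` with `x₀ ∈ H`,
`εᵢ ∈ {1, -1}`, `xᵢ ∈ C` if `εᵢ = 1`, `xᵢ ∈ D` if `εᵢ = -1`, and `xᵢ ≠ 1` whenever
`εᵢ = -ε_{i+1}` with `i < k`. -/
theorem stmt_7 {H : Type*} [Group H] (A B : Subgroup H) (φ : A ≃* B)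
    (C D : Set H) (h1C : (1 : H) ∈ C) (h1D : (1 : H) ∈ D)
    (hC : ∀ h : H, ∃! p : H × H, p.1 ∈ A ∧ p.2 ∈ C ∧ h = p.1 * p.2)
    (hD : ∀ h : H, ∃! p : H × H, p.1 ∈ B ∧ p.2 ∈ D ∧ h = p.1 * p.2)
    (g : HNNExtension H A B φ) :
    ∃! p : H × List (ℤ × H),
      (∀ q ∈ p.2, (q.1 = 1 ∨ q.1 = -1) ∧ (q.1 = 1 → q.2 ∈ C) ∧ (q.1 = -1 → q.2 ∈ D)) ∧
      List.Chain' (fun q q' : ℤ × H => q.1 = -q'.1 → q.2 ≠ 1) p.2 ∧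
      g = HNNExtension.of p.1 *
        (p.2.map (fun q : ℤ × H =>
          (HNNExtension.t : HNNExtension H A B φ) ^ q.1 * HNNExtension.of q.2)).prod := by
  have hAC := Subgroup.isComplement_of_existsUnique_mul hC
  have hBD := Subgroup.isComplement_of_existsUnique_mul hD
  let d := TransversalPair.ofComplements hAC hBD
  let w := equiv φ d g
  have hw : w.prod φ = g := (equiv φ d).symm_apply_apply g
  obtain ⟨hmem, hchain⟩ :=
    (exists_toIntList_eq_iff hAC hBD h1C h1D w.head (toIntList w)).1 ⟨w, rfl, rfl⟩
  refine ⟨(w.head, toIntList w), ⟨hmem, hchain, (w.of_head_mul_prod_toIntList.trans hw).symm⟩, ?_⟩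
  rintro ⟨h₀, l⟩ ⟨hmem', hchain', hg⟩
  obtain ⟨w', rfl, rfl⟩ := (exists_toIntList_eq_iff hAC hBD h1C h1D h₀ l).2 ⟨hmem', hchain'⟩
  rw [prod_injective φ d (w'.of_head_mul_prod_toIntList.symm.trans (hg.symm.trans hw.symm))]
end

section
/- Let G = ⟨H, t | t a t⁻¹ = φ(a) for a ∈ A⟩ be an HNN extension with A = H (so φ : H → B is an isomorphism onto a subgroup B ≤ H), and let η : Σ → G be a map from a finite set with η(Σ) contained in the union of the canonical image of H and {t, t⁻¹}. If w is a word over Σ such that in every prefix of w the number of letters mapped by η to t is at least the number of letters mapped to t⁻¹, and in w itself these two numbers are equal, then w represents an element of the canonical image of H. -/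
universe u

open Monoid

/-- The number of letters of the word `w` that `η` maps to `g`. -/
noncomputable def countEq {α G : Type*} (η : α → G) (g : G) (w : List α) : ℕ :=
  letI := Classical.decEq G
  (w.map η).count g


namespace Stmt9Aux

theorem prefix_append_cases {β : Type*} :
    ∀ (a : List β) {p b : List β}, p <+: a ++ b →
      p <+: a ∨ ∃ q, q <+: b ∧ p = a ++ q := by
  intro a
  induction a with
  | nil => intro p b h; exact Or.inr ⟨p, h, rfl⟩
  | cons x a ih =>
    intro p b h
    cases p with
    | nil => exact Or.inl List.nil_prefix
    | cons y p =>
      rw [List.cons_append, List.cons_prefix_cons] at h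
      obtain ⟨rfl, h⟩ := h
      rcases ih h with h1 | ⟨q, hq, rfl⟩
      · exact Or.inl (List.cons_prefix_cons.2 ⟨rfl, h1⟩)
      · exact Or.inr ⟨q, hq, rfl⟩

theorem first_split {β : Type*} (a : β) :
    ∀ (l : List β), a ∈ l → ∃ u v, l = u ++ a :: v ∧ a ∉ u := by
  intro l
  induction l with
  | nil => intro h; simp at h
  | cons b l ih =>
    intro h
    by_cases hb : a = b
    · exact ⟨[], l, by simp [hb], by simp⟩
    · rcases ih (by simpa [hb] using h) with ⟨u, v, rfl, hu⟩
      exact ⟨b :: u, v, rfl, by simp [hu, hb]⟩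

theorem key {G : Type*} [Group G] [DecidableEq G] (K : Subgroup G) (t : G)
    (hconj : ∀ g ∈ K, t * g * t⁻¹ ∈ K)
    (htK : t ∉ K) (htne : t ≠ t⁻¹) :
    ∀ (n : ℕ) (l : List G), l.count t⁻¹ = n →
      (∀ g ∈ l, g ∈ K ∨ g = t ∨ g = t⁻¹) →
      (∀ p, p <+: l → p.count t⁻¹ ≤ p.count t) →
      l.count t = l.count t⁻¹ → l.prod ∈ K := by
  have htK' : t⁻¹ ∉ K := fun h => htK (by simpa using inv_mem h)
  intro n
  induction n with
  | zero =>
    intro l hcnt hmem hpre heq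
    refine Subgroup.list_prod_mem K ?_
    intro x hx
    rcases hmem x hx with h | h | h
    · exact h
    · have : 0 < l.count t := List.count_pos_iff.2 (h ▸ hx)
      omega
    · have : 0 < l.count t⁻¹ := List.count_pos_iff.2 (h ▸ hx)
      omega
  | succ n ih =>
    intro l hcnt hmem hpre heq
    have hmemv : t⁻¹ ∈ l := List.count_pos_iff.1 (by omega)
    obtain ⟨w0, v, rfl, hw0⟩ := first_split t⁻¹ l hmemv
    have hw0c : w0.count t⁻¹ = 0 := List.count_eq_zero.2 hw0
    have htw0 : t ∈ w0 := by
      have h1 := hpre (w0 ++ [t⁻¹]) ⟨v, by simp⟩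
      simp only [List.count_append, List.count_cons, List.count_nil, hw0c,
        beq_iff_eq, htne, if_false, Ne.symm htne, if_true, beq_self_eq_true] at h1
      exact List.count_pos_iff.1 (by omega)
    obtain ⟨u2r, u1r, hrev, hu2r⟩ := first_split t w0.reverse (by simpa using htw0)
    have hw0eq : w0 = u1r.reverse ++ t :: u2r.reverse := by
      have h2 := congrArg List.reverse hrev
      simpa using h2
    set u1 := u1r.reverse with hu1
    set u2 := u2r.reverse with hu2
    have htnu2 : t ∉ u2 := by simpa [hu2] using hu2r
    subst hw0eq
    -- basic count facts
    have c1 : u1.count t⁻¹ = 0 := List.count_eq_zero.2 (fun h => hw0 (by simp [h]))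
    have c2 : u2.count t⁻¹ = 0 := List.count_eq_zero.2 (fun h => hw0 (by simp [h]))
    have c3 : u2.count t = 0 := List.count_eq_zero.2 htnu2
    -- product of u2 lies in K
    have hu2K : u2.prod ∈ K := by
      refine Subgroup.list_prod_mem K ?_
      intro x hx
      rcases hmem x (by simp [hx]) with h | rfl | rfl
      · exact h
      · exact absurd hx htnu2
      · exact absurd hx (fun h => hw0 (by simp [h]))
    set k := t * u2.prod * t⁻¹ with hk
    have hkK : k ∈ K := hconj _ hu2K
    have hkt : k ≠ t := fun h => htK (h ▸ hkK)
    have hkt' : k ≠ t⁻¹ := fun h => htK' (h ▸ hkK)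
    set l₂ := u1 ++ k :: v with hl₂
    -- counts in v
    have hvcnt : v.count t⁻¹ = n := by
      simp only [List.count_append, List.count_cons, List.count_nil, beq_iff_eq,
        htne, Ne.symm htne, if_false, if_true, c1, c2] at hcnt
      simp at hcnt
      omega
    have hl₂cnt : l₂.count t⁻¹ = n := by
      simp [hl₂, List.count_append, List.count_cons, hkt', c1, hvcnt]
    have hl₂mem : ∀ g ∈ l₂, g ∈ K ∨ g = t ∨ g = t⁻¹ := by
      intro g hg
      rw [hl₂, List.mem_append, List.mem_cons] at hg
      rcases hg with h | h | h
      · exact hmem g (by simp [h])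
      · exact Or.inl (h ▸ hkK)
      · exact hmem g (by simp [h])
    have hl₂pre : ∀ p, p <+: l₂ → p.count t⁻¹ ≤ p.count t := by
      intro p hp
      rw [hl₂, show u1 ++ k :: v = (u1 ++ [k]) ++ v by simp] at hp
      rcases prefix_append_cases _ hp with h | ⟨q, hq, rfl⟩
      · have hsub : p.count t⁻¹ ≤ (u1 ++ [k]).count t⁻¹ :=
          h.sublist.count_le _
        simp [List.count_append, c1, List.count_cons, hkt'] at hsub
        omega
      · obtain ⟨s, rfl⟩ := hq
        have hP := hpre ((u1 ++ t :: u2) ++ t⁻¹ :: q) ⟨s, by simp⟩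
        simp only [List.count_append, List.count_cons, List.count_nil, beq_iff_eq,
          htne, Ne.symm htne, if_false, if_true, c1, c2, c3, hkt, hkt'] at hP ⊢
        simp at hP ⊢
        omega
    have hl₂eq : l₂.count t = l₂.count t⁻¹ := by
      simp only [List.count_append, List.count_cons, List.count_nil, beq_iff_eq,
        htne, Ne.symm htne, if_false, if_true, c1, c2, c3] at heq
      simp at heq
      simp [hl₂, List.count_append, List.count_cons, hkt, hkt', c1, hvcnt]
      omega
    have hprod : ((u1 ++ t :: u2) ++ t⁻¹ :: v).prod = l₂.prod := by
      simp [hl₂, hk, List.prod_append, List.prod_cons, mul_assoc]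
    rw [hprod]
    exact ih l₂ hl₂cnt hl₂mem hl₂pre hl₂eq

end Stmt9Aux

namespace Stmt9Aux2
open HNNExtension

variable {G : Type*} [Group G] {A B : Subgroup G} {φ : A ≃* B}

theorem t_sq_not_mem (φ : A ≃* B) :
    (t : HNNExtension G A B φ) * t ∉
      (of : G →* HNNExtension G A B φ).range := by
  intro h
  have hchain : ([((1 : ℤˣ), (1 : G)), ((1 : ℤˣ), (1 : G))]).Chain'
      (fun a b => a.2 ∈ toSubgroup A B a.1 → a.1 = b.1) :=
    List.isChain_cons_cons.2 ⟨fun _ => rfl, List.isChain_singleton _⟩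
  let w : NormalWord.ReducedWord G A B := ⟨1, [((1 : ℤˣ), (1 : G)), ((1 : ℤˣ), (1 : G))], hchain⟩
  have hw : w.prod φ = t * t := by
    simp [NormalWord.ReducedWord.prod, w, mul_assoc]
  have := ReducedWord.toList_eq_nil_of_mem_of_range φ w (by rw [hw]; exact h)
  simp [w] at this

theorem t_not_mem (φ : A ≃* B) :
    (t : HNNExtension G A B φ) ∉ (of : G →* HNNExtension G A B φ).range := by
  intro h
  let w : NormalWord.ReducedWord G A B := ⟨1, [((1 : ℤˣ), (1 : G))], List.isChain_singleton _⟩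
  have hw : w.prod φ = t := by simp [NormalWord.ReducedWord.prod, w]
  have := ReducedWord.toList_eq_nil_of_mem_of_range φ w (by rw [hw]; exact h)
  simp [w] at this

theorem t_ne_inv (φ : A ≃* B) :
    (t : HNNExtension G A B φ) ≠ (t : HNNExtension G A B φ)⁻¹ := by
  intro h
  apply t_sq_not_mem φ
  rw [mul_eq_one_iff_eq_inv.2 h]
  exact one_mem _

end Stmt9Aux2


/-- Let `G = ⟨H, t | t a t⁻¹ = φ(a), a ∈ A⟩` with `A = H`, and let
`η : Σ → G` have image contained in the image of `H` together with `{t, t⁻¹}`. If in every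
prefix of `w` the number of letters mapped to `t` is at least the number mapped to `t⁻¹`,
and in `w` itself the two numbers agree, then `w` represents an element of the canonical
image of `H`. -/
theorem stmt_9 {H : Type*} [Group H] (B : Subgroup H) (φ : (⊤ : Subgroup H) ≃* B)
    {α : Type*} [Fintype α] (η : α → HNNExtension H ⊤ B φ)
    (hrange : ∀ a : α, η a ∈
      ((HNNExtension.of : H →* HNNExtension H ⊤ B φ).range : Set (HNNExtension H ⊤ B φ)) ∪
      {HNNExtension.t, (HNNExtension.t : HNNExtension H ⊤ B φ)⁻¹})
    (w : List α)
    (hpre : ∀ p : List α, p <+: w →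
      countEq η ((HNNExtension.t : HNNExtension H ⊤ B φ))⁻¹ p ≤
        countEq η (HNNExtension.t : HNNExtension H ⊤ B φ) p)
    (heq : countEq η (HNNExtension.t : HNNExtension H ⊤ B φ) w =
      countEq η ((HNNExtension.t : HNNExtension H ⊤ B φ))⁻¹ w) :
    evalWord η w ∈ (HNNExtension.of : H →* HNNExtension H ⊤ B φ).range := by
  letI := Classical.decEq (HNNExtension H ⊤ B φ)
  have hc : ∀ (g : HNNExtension H ⊤ B φ) (p : List α),
      countEq η g p = (p.map η).count g := fun _ _ => rfl
  have hrange' : ∀ a, η a ∈ (HNNExtension.of : H →* HNNExtension H ⊤ B φ).range ∨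
      η a = HNNExtension.t ∨ η a = (HNNExtension.t : HNNExtension H ⊤ B φ)⁻¹ := by
    intro a
    have h := hrange a
    simp only [Set.mem_union, Set.mem_insert_iff, Set.mem_singleton_iff,
      SetLike.mem_coe] at h
    tauto
  show (w.map η).prod ∈ (HNNExtension.of : H →* HNNExtension H ⊤ B φ).range
  by_cases htK : (HNNExtension.t : HNNExtension H ⊤ B φ) ∈
      (HNNExtension.of : H →* HNNExtension H ⊤ B φ).range
  · refine Subgroup.list_prod_mem _ ?_
    intro x hx
    obtain ⟨a, _, rfl⟩ := List.mem_map.1 hx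
    rcases hrange' a with h | h | h
    · exact h
    · exact h ▸ htK
    · exact h ▸ inv_mem htK
  · have hconj : ∀ g ∈ (HNNExtension.of : H →* HNNExtension H ⊤ B φ).range,
        HNNExtension.t * g * (HNNExtension.t : HNNExtension H ⊤ B φ)⁻¹ ∈
          (HNNExtension.of : H →* HNNExtension H ⊤ B φ).range := by
      rintro g ⟨h, rfl⟩
      exact ⟨(φ ⟨h, trivial⟩ : B), HNNExtension.equiv_eq_conj (φ := φ) ⟨h, trivial⟩⟩
    have htne : (HNNExtension.t : HNNExtension H ⊤ B φ) ≠ HNNExtension.t⁻¹ :=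
      Stmt9Aux2.t_ne_inv φ
    refine Stmt9Aux.key _ HNNExtension.t hconj htK htne
      ((w.map η).count (HNNExtension.t : HNNExtension H ⊤ B φ)⁻¹) (w.map η) rfl ?_ ?_ ?_
    · intro g hg
      obtain ⟨a, _, rfl⟩ := List.mem_map.1 hg
      exact hrange' a
    · intro p hp
      have hpt : p = (w.take p.length).map η := by
        rw [List.map_take, ← List.prefix_iff_eq_take.1 hp]
      rw [hpt]
      have h2 := hpre (w.take p.length) (List.take_prefix _ _)
      rwa [hc, hc] at h2
    · have h2 := heq
      rwa [hc, hc] at h2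
end

section
/- Let 1 ≤ p ≤ q and let BS(p,q) = ⟨a, t | t aᵖ t⁻¹ = a^q⟩ be the Baumslag–Solitar group, realized as the HNN extension of the infinite cyclic group H = ⟨a⟩ with associated subgroups A = ⟨aᵖ⟩ and B = ⟨a^q⟩ and isomorphism aᵖ ↦ a^q. Consider words over the symmetric generating set Σ = {a, a⁻¹, t, t⁻¹} (with the obvious evaluation in BS(p,q)). Then the set of words representing an element of the subgroup ⟨a⟩ of BS(p,q) is strongly negligible if and only if p ≥ 2. -/
universe u

open Monoid

/-- The generator `a` of the infinite cyclic group, written multiplicatively. -/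
abbrev bsGen : Multiplicative ℤ := Multiplicative.ofAdd 1

/-- The subgroup `⟨aᵐ⟩` of the infinite cyclic group `⟨a⟩`. -/
abbrev bsSub (m : ℕ) : Subgroup (Multiplicative ℤ) := Subgroup.zpowers (bsGen ^ m)

section BSMachinery

open Monoid HNNExtension HNNExtension.NormalWord

namespace BSAux

variable {G : Type u_1} [Group G] {A B : Subgroup G} {φ : A ≃* B}
variable (d : TransversalPair G A B)

/-- The normal word associated to an element of the HNN extension. -/
noncomputable def nw (φ : A ≃* B) (d : TransversalPair G A B) (γ : HNNExtension G A B φ) :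
    NormalWord d := γ • NormalWord.empty

/-- `γ` is "pop ready" : some `t^u` multiplication cancels. -/
def Ready (φ : A ≃* B) (d : TransversalPair G A B) (γ : HNNExtension G A B φ) : Prop :=
  ∃ u : ℤˣ, Cancels u (nw φ d γ)

lemma nw_of_mul (c : G) (γ : HNNExtension G A B φ) :
    nw φ d (of c * γ) = c • nw φ d γ := by
  rw [nw, mul_smul, of_smul_eq_smul]; rfl

lemma nw_t_zpow_mul (u : ℤˣ) (γ : HNNExtension G A B φ) :
    nw φ d (t ^ (u : ℤ) * γ) = unitsSMul φ u (nw φ d γ) := by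
  rw [nw, mul_smul, t_pow_smul_eq_unitsSMul]; rfl

lemma nw_of (c : G) : (nw φ d (of c)).toList = [] := by
  have : nw φ d (of c) = c • (NormalWord.empty : NormalWord d) := by
    rw [nw, of_smul_eq_smul]
  rw [this, group_smul_toList]; rfl

lemma nw_one : (nw φ d 1).toList = [] := by
  have h := nw_of (φ := φ) d (1 : G)
  rwa [map_one] at h

lemma cancels_unique {u u' : ℤˣ} {w : NormalWord d} (h : Cancels u w) (h' : Cancels u' w) :
    u = u' := by
  have h2 := h.2; have h'2 := h'.2
  rw [h2] at h'2
  have := Option.some_injective _ h'2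
  exact neg_injective this

lemma toList_unitsSMulWithCancel (u : ℤˣ) (w : NormalWord d) (h : Cancels u w) :
    (unitsSMulWithCancel φ u w h).toList = w.toList.tail := by
  induction w using consRecOn with
  | ofGroup g => simp [Cancels, ofGroup] at h
  | cons g u' w h1 h2 ih =>
    simp [unitsSMulWithCancel]

lemma length_unitsSMul_of_cancels (u : ℤˣ) (w : NormalWord d) (h : Cancels u w) :
    (unitsSMul φ u w).toList.length + 1 = w.toList.length := by
  rw [unitsSMul, dif_pos h, toList_unitsSMulWithCancel]
  have hne : w.toList ≠ [] := by
    intro hnil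
    have := h.2
    rw [hnil] at this
    simp at this
  rw [List.length_tail]
  have : 0 < w.toList.length := List.length_pos_iff.2 hne
  omega

lemma toList_unitsSMul_of_not_cancels (u : ℤˣ) (w : NormalWord d) (h : ¬ Cancels u w) :
    (unitsSMul φ u w).toList.length = w.toList.length + 1 := by
  rw [unitsSMul, dif_neg h]
  simp [cons]

end BSAux

namespace BSAux2
open BSAux
open scoped Classical

variable {G : Type u_1} [Group G] {A B : Subgroup G} {φ : A ≃* B}
variable (d : TransversalPair G A B)

/-- The weight function on the HNN extension. -/
noncomputable def wt (φ : A ≃* B) (d : TransversalPair G A B) (γ : HNNExtension G A B φ) : ℝ :=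
  (31/50 : ℝ) ^ (nw φ d γ).toList.length * (if Ready φ d γ then (6/5 : ℝ) else 1)

lemma wt_pos (γ : HNNExtension G A B φ) : 0 < wt φ d γ := by
  unfold wt
  positivity

lemma wt_le (γ : HNNExtension G A B φ) :
    wt φ d γ ≤ (31/50 : ℝ) ^ (nw φ d γ).toList.length * (6/5 : ℝ) := by
  unfold wt
  have h1 : (0:ℝ) < (31/50 : ℝ) ^ (nw φ d γ).toList.length := by positivity
  split
  · exact le_refl _
  · nlinarith

lemma not_ready_of_mul_of (g0 : G) (hA : g0 ∉ A) (hB : g0 ∉ B) {γ : HNNExtension G A B φ}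
    (hR : Ready φ d γ) : ¬ Ready φ d (of g0 * γ) := by
  rintro ⟨u', hc'⟩
  obtain ⟨u, hc⟩ := hR
  rw [nw_of_mul] at hc'
  have hfst : (nw φ d γ).toList.head?.map Prod.fst = some (-u) := hc.2
  have hfst' : ((g0 • nw φ d γ).toList.head?.map Prod.fst) = some (-u') := hc'.2
  rw [group_smul_toList] at hfst'
  have huu : u = u' := neg_injective (Option.some_injective _ (hfst.symm.trans hfst'))
  subst huu
  have h1 : (nw φ d γ).head ∈ toSubgroup A B u := hc.1
  have h2 : g0 * (nw φ d γ).head ∈ toSubgroup A B u := by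
    have := hc'.1; rwa [group_smul_head] at this
  have hg0 : g0 ∈ toSubgroup A B u := by
    have := mul_mem h2 (inv_mem h1)
    simpa [mul_assoc] using this
  rcases Int.units_eq_one_or u with rfl | rfl
  · exact hA (by simpa using hg0)
  · exact hB (by simpa using hg0)

lemma wt_eq_of_ready {γ : HNNExtension G A B φ} (hR : Ready φ d γ) :
    wt φ d γ = (31/50 : ℝ) ^ (nw φ d γ).toList.length * (6/5 : ℝ) := by
  unfold wt; rw [if_pos hR]

lemma wt_eq_of_not_ready {γ : HNNExtension G A B φ} (hR : ¬ Ready φ d γ) :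
    wt φ d γ = (31/50 : ℝ) ^ (nw φ d γ).toList.length := by
  unfold wt; rw [if_neg hR, mul_one]

lemma step_sum (g0 : G) (hA : g0 ∉ A) (hB : g0 ∉ B) (γ : HNNExtension G A B φ) :
    wt φ d (of g0 * γ) + wt φ d (of g0⁻¹ * γ) + wt φ d (t * γ) + wt φ d (t⁻¹ * γ)
      ≤ (399/100 : ℝ) * wt φ d γ := by
  have hA' : g0⁻¹ ∉ A := fun h => hA (by simpa using inv_mem h)
  have hB' : g0⁻¹ ∉ B := fun h => hB (by simpa using inv_mem h)
  set β : ℝ := 31/50 with hβ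
  set k := (nw φ d γ).toList.length with hk
  have hβpos : (0:ℝ) < β := by norm_num [hβ]
  have hlen₁ : (nw φ d (of g0 * γ)).toList.length = k := by
    rw [nw_of_mul, group_smul_toList]
  have hlen₂ : (nw φ d (of g0⁻¹ * γ)).toList.length = k := by
    rw [nw_of_mul, group_smul_toList]
  have e1 : (t : HNNExtension G A B φ) ^ ((1:ℤˣ):ℤ) = t := by simp
  have e2 : (t : HNNExtension G A B φ) ^ (((-1:ℤˣ)):ℤ) = t⁻¹ := by simp
  by_cases hR : Ready φ d γ
  · obtain ⟨u, hcu⟩ := id hR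
    -- k ≥ 1
    have hne : (nw φ d γ).toList ≠ [] := by
      intro hnil
      have := hcu.2; rw [hnil] at this; simp at this
    have hk1 : 1 ≤ k := by
      have : 0 < (nw φ d γ).toList.length := List.length_pos_iff.2 hne
      omega
    -- a-steps
    have ha₁ : wt φ d (of g0 * γ) = β ^ k := by
      rw [wt_eq_of_not_ready d (not_ready_of_mul_of d g0 hA hB hR), hlen₁]
    have ha₂ : wt φ d (of g0⁻¹ * γ) = β ^ k := by
      rw [wt_eq_of_not_ready d (not_ready_of_mul_of d g0⁻¹ hA' hB' hR), hlen₂]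
    -- pop step
    have hpoplen : (nw φ d (t ^ (u:ℤ) * γ)).toList.length + 1 = k := by
      rw [nw_t_zpow_mul]
      exact length_unitsSMul_of_cancels d u _ hcu
    have hpop : wt φ d (t ^ (u:ℤ) * γ) ≤ β ^ (k-1) * (6/5) := by
      refine le_trans (wt_le d _) ?_
      have : (nw φ d (t ^ (u:ℤ) * γ)).toList.length = k - 1 := by omega
      rw [this]
    -- push step
    have hnc : ¬ Cancels (-u) (nw φ d γ) := by
      intro hc'
      have huu := cancels_unique d hcu hc'
      rcases Int.units_eq_one_or u with rfl | rfl
      · exact absurd huu (by decide)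
      · exact absurd huu (by decide)
    have hpushlen : (nw φ d (t ^ ((-u : ℤˣ):ℤ) * γ)).toList.length = k + 1 := by
      rw [nw_t_zpow_mul]
      exact toList_unitsSMul_of_not_cancels d (-u) _ hnc
    have hpush : wt φ d (t ^ ((-u : ℤˣ):ℤ) * γ) ≤ β ^ (k+1) * (6/5) := by
      refine le_trans (wt_le d _) ?_
      rw [hpushlen]
    have hwγ : wt φ d γ = β ^ k * (6/5) := wt_eq_of_ready d hR
    -- numeric conclusion
    obtain ⟨j, hj⟩ : ∃ j, k = j + 1 := ⟨k - 1, by omega⟩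
    rw [hj] at ha₁ ha₂ hpop hpush hwγ
    have hβj : (0:ℝ) ≤ β ^ j := le_of_lt (by positivity)
    have hnum : β ^ (j+1) + β ^ (j+1) + β ^ (j+1-1) * (6/5) + β ^ (j+1+1) * (6/5)
        ≤ (399/100) * (β ^ (j+1) * (6/5)) := by
      have hj1 : j + 1 - 1 = j := by omega
      rw [hj1, pow_succ, pow_succ, pow_succ]
      rw [hβ]
      nlinarith [hβj]
    rcases Int.units_eq_one_or u with rfl | rfl
    · rw [e1] at hpop hpoplen
      rw [show (-(1:ℤˣ)) = (-1:ℤˣ) from rfl, e2] at hpush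
      rw [ha₁, ha₂, hwγ]
      calc β ^ (j+1) + β ^ (j+1) + wt φ d (t * γ) + wt φ d (t⁻¹ * γ)
          ≤ β ^ (j+1) + β ^ (j+1) + β ^ (j+1-1) * (6/5) + β ^ (j+1+1) * (6/5) := by
            have := hpop; have := hpush; linarith
        _ ≤ (399/100) * (β ^ (j+1) * (6/5)) := hnum
    · rw [e2] at hpop hpoplen
      rw [show (-(-1:ℤˣ)) = (1:ℤˣ) from (by norm_num), e1] at hpush
      rw [ha₁, ha₂, hwγ]
      calc β ^ (j+1) + β ^ (j+1) + wt φ d (t * γ) + wt φ d (t⁻¹ * γ)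
          ≤ β ^ (j+1) + β ^ (j+1) + β ^ (j+1+1) * (6/5) + β ^ (j+1-1) * (6/5) := by
            have := hpop; have := hpush; linarith
        _ ≤ (399/100) * (β ^ (j+1) * (6/5)) := by linarith [hnum]
  · -- not ready case
    have hwγ : wt φ d γ = β ^ k := wt_eq_of_not_ready d hR
    have ha₁ : wt φ d (of g0 * γ) ≤ β ^ k * (6/5) := by
      refine le_trans (wt_le d _) ?_; rw [hlen₁]
    have ha₂ : wt φ d (of g0⁻¹ * γ) ≤ β ^ k * (6/5) := by
      refine le_trans (wt_le d _) ?_; rw [hlen₂]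
    have hnc : ∀ u : ℤˣ, ¬ Cancels u (nw φ d γ) := fun u hc => hR ⟨u, hc⟩
    have hp : ∀ u : ℤˣ, wt φ d (t ^ (u:ℤ) * γ) ≤ β ^ (k+1) * (6/5) := by
      intro u
      refine le_trans (wt_le d _) ?_
      rw [nw_t_zpow_mul, toList_unitsSMul_of_not_cancels d u _ (hnc u)]
    have hp1 := hp 1
    have hp2 := hp (-1)
    rw [e1] at hp1
    rw [e2] at hp2
    have hβk : (0:ℝ) ≤ β ^ k := le_of_lt (by positivity)
    have hnum : β ^ k * (6/5) + β ^ k * (6/5) + β ^ (k+1) * (6/5) + β ^ (k+1) * (6/5)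
        ≤ (399/100) * β ^ k := by
      rw [pow_succ, hβ]
      nlinarith [hβk]
    rw [hwγ]
    linarith

lemma wt_of_mem_range {γ : HNNExtension G A B φ}
    (h : γ ∈ (of : G →* HNNExtension G A B φ).range) : wt φ d γ = 1 := by
  obtain ⟨c, rfl⟩ := h
  have h1 : (nw φ d (of c)).toList = [] := nw_of d c
  have h2 : ¬ Ready φ d (of c) := by
    rintro ⟨u, hc⟩
    have := hc.2
    rw [h1] at this
    simp at this
  rw [wt_eq_of_not_ready d h2, h1]
  simp

lemma wt_one : wt φ d (1 : HNNExtension G A B φ) = 1 := by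
  have : (1 : HNNExtension G A B φ) ∈ (of : G →* HNNExtension G A B φ).range :=
    ⟨1, map_one _⟩
  exact wt_of_mem_range d this

lemma evalWord_cons {α H : Type*} [Monoid H] (η : α → H) (x : α) (l : List α) :
    evalWord η (x :: l) = η x * evalWord η l := by
  simp [evalWord]

lemma evalWord_nil {α H : Type*} [Monoid H] (η : α → H) : evalWord η ([] : List α) = 1 := rfl

/-- Sum of weights over all words of length `n`. -/
noncomputable def Fsum (φ : A ≃* B) (d : TransversalPair G A B)
    (η : Fin 4 → HNNExtension G A B φ) (n : ℕ) : ℝ :=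
  ∑ f : Fin n → Fin 4, wt φ d (evalWord η (List.ofFn f))

lemma Fsum_zero (η : Fin 4 → HNNExtension G A B φ) : Fsum φ d η 0 = 1 := by
  rw [Fsum, Fintype.sum_unique, List.ofFn_zero, evalWord_nil, wt_one]

lemma Fsum_succ_le (g0 : G) (hA : g0 ∉ A) (hB : g0 ∉ B)
    (η : Fin 4 → HNNExtension G A B φ)
    (hη0 : η 0 = of g0) (hη1 : η 1 = (of g0)⁻¹) (hη2 : η 2 = t) (hη3 : η 3 = t⁻¹)
    (n : ℕ) : Fsum φ d η (n+1) ≤ (399/100) * Fsum φ d η n := by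
  have key : ∀ m : HNNExtension G A B φ,
      ∑ x : Fin 4, wt φ d (η x * m) ≤ (399/100) * wt φ d m := by
    intro m
    rw [Fin.sum_univ_four, hη0, hη1, hη2, hη3]
    have := step_sum d g0 hA hB m
    rw [map_inv] at this
    linarith
  calc Fsum φ d η (n+1)
      = ∑ p : Fin 4 × (Fin n → Fin 4),
          wt φ d (evalWord η (List.ofFn ((Fin.consEquiv (fun _ => Fin 4)) p))) :=
        (Equiv.sum_comp (Fin.consEquiv (fun _ => Fin 4)) _).symm
    _ = ∑ p : Fin 4 × (Fin n → Fin 4), wt φ d (η p.1 * evalWord η (List.ofFn p.2)) := by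
        apply Finset.sum_congr rfl
        intro p _
        rw [show ((Fin.consEquiv (fun _ => Fin 4)) p : Fin (n+1) → Fin 4)
            = Fin.cons p.1 p.2 from rfl, List.ofFn_succ]
        simp only [Fin.cons_zero, Fin.cons_succ]
        rw [evalWord_cons]
    _ = ∑ f : Fin n → Fin 4, ∑ x : Fin 4, wt φ d (η x * evalWord η (List.ofFn f)) := by
        rw [Fintype.sum_prod_type, Finset.sum_comm]
    _ ≤ ∑ f : Fin n → Fin 4, (399/100) * wt φ d (evalWord η (List.ofFn f)) :=
        Finset.sum_le_sum (fun f _ => key _)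
    _ = (399/100) * Fsum φ d η n := by rw [← Finset.mul_sum]; rfl

lemma Fsum_le (g0 : G) (hA : g0 ∉ A) (hB : g0 ∉ B)
    (η : Fin 4 → HNNExtension G A B φ)
    (hη0 : η 0 = of g0) (hη1 : η 1 = (of g0)⁻¹) (hη2 : η 2 = t) (hη3 : η 3 = t⁻¹)
    (n : ℕ) : Fsum φ d η n ≤ (399/100) ^ n := by
  induction n with
  | zero => rw [Fsum_zero]; norm_num
  | succ n ih =>
    calc Fsum φ d η (n+1) ≤ (399/100) * Fsum φ d η n :=
          Fsum_succ_le d g0 hA hB η hη0 hη1 hη2 hη3 n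
      _ ≤ (399/100) * (399/100)^n := by linarith
      _ = (399/100)^(n+1) := by ring

lemma card_filter_le (d : TransversalPair G A B) (g0 : G) (hA : g0 ∉ A) (hB : g0 ∉ B)
    (η : Fin 4 → HNNExtension G A B φ)
    (hη0 : η 0 = of g0) (hη1 : η 1 = (of g0)⁻¹) (hη2 : η 2 = t) (hη3 : η 3 = t⁻¹)
    (n : ℕ) :
    ((Finset.univ.filter (fun f : Fin n → Fin 4 =>
        evalWord η (List.ofFn f) ∈ (of : G →* HNNExtension G A B φ).range)).card : ℝ)
      ≤ (399/100) ^ n := by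
  refine le_trans ?_ (Fsum_le d g0 hA hB η hη0 hη1 hη2 hη3 n)
  rw [Fsum]
  calc ((Finset.univ.filter (fun f : Fin n → Fin 4 =>
        evalWord η (List.ofFn f) ∈ (of : G →* HNNExtension G A B φ).range)).card : ℝ)
      = ∑ f ∈ Finset.univ.filter (fun f : Fin n → Fin 4 =>
          evalWord η (List.ofFn f) ∈ (of : G →* HNNExtension G A B φ).range),
          wt φ d (evalWord η (List.ofFn f)) := by
        rw [Finset.sum_congr rfl (fun f hf => ?_), Finset.sum_const, nsmul_eq_mul, mul_one]
        exact (wt_of_mem_range d (Finset.mem_filter.1 hf).2)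
    _ ≤ ∑ f : Fin n → Fin 4, wt φ d (evalWord η (List.ofFn f)) :=
        Finset.sum_le_sum_of_subset_of_nonneg (Finset.filter_subset _ _)
          (fun f _ _ => le_of_lt (wt_pos d _))

end BSAux2

namespace BSAux3
open scoped Classical

lemma ofFn_get_cast {α : Type*} {n : ℕ} (l : List α) (h : l.length = n) :
    List.ofFn (fun i : Fin n => l.get (Fin.cast h.symm i)) = l := by
  subst h
  simpa using List.ofFn_get l

lemma wordCount_le_card_filter {α : Type*} [Fintype α] [DecidableEq α]
    (L : Set (List α)) (n : ℕ) :
    wordCount L n ≤ (Finset.univ.filter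
      (fun f : Fin n → α => List.ofFn f ∈ L)).card := by
  classical
  have key : wordCount L n ≤ Nat.card {f : Fin n → α // List.ofFn f ∈ L} := by
    apply Nat.card_le_card_of_injective
      (f := fun w : {w : List α // w ∈ L ∧ w.length = n} =>
        (⟨fun i => w.1.get (Fin.cast w.2.2.symm i), by
          rw [ofFn_get_cast _ w.2.2]; exact w.2.1⟩ : {f : Fin n → α // List.ofFn f ∈ L}))
    intro w w' hww
    apply Subtype.ext
    have h1 : (fun i : Fin n => w.1.get (Fin.cast w.2.2.symm i))
        = (fun i : Fin n => w'.1.get (Fin.cast w'.2.2.symm i)) := congrArg Subtype.val hww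
    have h2 := congrArg List.ofFn h1
    rwa [ofFn_get_cast _ w.2.2, ofFn_get_cast _ w'.2.2] at h2
  rwa [Nat.card_eq_fintype_card, Fintype.card_subtype] at key

lemma card_filter_le_wordCount {α : Type*} [Fintype α] [DecidableEq α]
    (L : Set (List α)) (n : ℕ) :
    (Finset.univ.filter (fun f : Fin n → α => List.ofFn f ∈ L)).card ≤ wordCount L n := by
  classical
  have hfin : Finite {w : List α // w ∈ L ∧ w.length = n} := by
    apply Finite.of_injective
      (f := fun w : {w : List α // w ∈ L ∧ w.length = n} =>
        (fun i => w.1.get (Fin.cast w.2.2.symm i) : Fin n → α))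
    intro w w' hww
    apply Subtype.ext
    have h2 := congrArg List.ofFn hww
    rwa [ofFn_get_cast _ w.2.2, ofFn_get_cast _ w'.2.2] at h2
  rw [← Fintype.card_subtype, ← Nat.card_eq_fintype_card]
  apply Nat.card_le_card_of_injective
    (f := fun f : {f : Fin n → α // List.ofFn f ∈ L} =>
      (⟨List.ofFn f.1, f.2, by simp⟩ : {w : List α // w ∈ L ∧ w.length = n}))
  intro f f' hff
  apply Subtype.ext
  have h1 : List.ofFn f.1 = List.ofFn f'.1 := congrArg Subtype.val hff
  exact List.ofFn_injective h1

end BSAux3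

namespace BSAux4
open BSAux BSAux2 BSAux3

lemma bsGen_not_mem {m : ℕ} (hm : 2 ≤ m) : bsGen ∉ bsSub m := by
  intro h
  rw [Subgroup.mem_zpowers_iff] at h
  obtain ⟨z, hz⟩ := h
  have : (m : ℤ) * z = 1 := by
    have h1 := congrArg Multiplicative.toAdd hz
    rw [toAdd_zpow, toAdd_pow, toAdd_ofAdd] at h1
    rw [nsmul_eq_mul, mul_one, zsmul_eq_mul] at h1
    rw [mul_comm] at h1
    exact_mod_cast h1
  have hdvd : (m : ℤ) ∣ 1 := Dvd.intro z (by linarith)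
  have := Int.le_of_dvd one_pos hdvd
  omega

theorem dir_ge (p q : ℕ) (hp : 2 ≤ p) (hpq : p ≤ q)
    (φ : bsSub p ≃* bsSub q)
    (η : Fin 4 → HNNExtension (Multiplicative ℤ) (bsSub p) (bsSub q) φ)
    (hη : η = ![HNNExtension.of bsGen, (HNNExtension.of bsGen :
        HNNExtension (Multiplicative ℤ) (bsSub p) (bsSub q) φ)⁻¹,
      HNNExtension.t, (HNNExtension.t : HNNExtension (Multiplicative ℤ) (bsSub p) (bsSub q) φ)⁻¹]) :
    StronglyNegligible {w : List (Fin 4) | evalWord η w ∈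
        (HNNExtension.of :
          Multiplicative ℤ →* HNNExtension (Multiplicative ℤ) (bsSub p) (bsSub q) φ).range} := by
  classical
  refine ⟨1, 399/400, one_pos, by norm_num, by norm_num, fun n => ?_⟩
  rcases TransversalPair.nonempty (Multiplicative ℤ) (bsSub p) (bsSub q) with ⟨d⟩
  have hA : bsGen ∉ bsSub p := bsGen_not_mem hp
  have hB : bsGen ∉ bsSub q := bsGen_not_mem (le_trans hp hpq)
  have hη0 : η 0 = of bsGen := by rw [hη]; rfl
  have hη1 : η 1 = (of bsGen :
      HNNExtension (Multiplicative ℤ) (bsSub p) (bsSub q) φ)⁻¹ := by rw [hη]; rfl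
  have hη2 : η 2 = (t : HNNExtension (Multiplicative ℤ) (bsSub p) (bsSub q) φ) := by
    rw [hη]; rfl
  have hη3 : η 3 = (t : HNNExtension (Multiplicative ℤ) (bsSub p) (bsSub q) φ)⁻¹ := by
    rw [hη]; rfl
  have hcard := card_filter_le d bsGen hA hB η hη0 hη1 hη2 hη3 n
  have hwc := wordCount_le_card_filter
    {w : List (Fin 4) | evalWord η w ∈
        (HNNExtension.of :
          Multiplicative ℤ →* HNNExtension (Multiplicative ℤ) (bsSub p) (bsSub q) φ).range} n
  have hwc' : (wordCount {w : List (Fin 4) | evalWord η w ∈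
        (HNNExtension.of :
          Multiplicative ℤ →* HNNExtension (Multiplicative ℤ) (bsSub p) (bsSub q) φ).range} n : ℝ)
      ≤ (399/100 : ℝ)^n := by
    refine le_trans ?_ hcard
    exact_mod_cast Nat.cast_le.2 hwc
  calc (wordCount _ n : ℝ) ≤ (399/100 : ℝ)^n := hwc'
    _ = 1 * (399/400 : ℝ)^n * (Fintype.card (Fin 4) : ℝ)^n := by
        rw [one_mul, Fintype.card_fin, ← mul_pow]
        norm_num

end BSAux4

namespace BSLow
open BSAux BSAux2 BSAux3

variable {G : Type u_1} [Group G] {A B : Subgroup G} {φ : A ≃* B}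

lemma t_pow_mul_of (hA : ∀ c : G, c ∈ A) (k : ℕ) (c : G) :
    ∃ c' : G, (t ^ k : HNNExtension G A B φ) * of c = of c' * t ^ k := by
  induction k generalizing c with
  | zero => exact ⟨c, by simp⟩
  | succ k ih =>
    obtain ⟨c'', hc''⟩ := ih ((φ ⟨c, hA c⟩ : B) : G)
    refine ⟨c'', ?_⟩
    have key : (t : HNNExtension G A B φ) * of c = of ((φ ⟨c, hA c⟩ : B) : G) * t :=
      t_mul_of ⟨c, hA c⟩
    rw [pow_succ, mul_assoc, key, ← mul_assoc, hc'', mul_assoc]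

lemma fin4_eq : ∀ x : Fin 4, x = 0 ∨ x = 1 ∨ x = 2 ∨ x = 3 := by decide

lemma eval_dyck (hA : ∀ c : G, c ∈ A)
    (η : Fin 4 → HNNExtension G A B φ) (g0 : G)
    (hη0 : η 0 = of g0) (hη1 : η 1 = (of g0)⁻¹) (hη2 : η 2 = t) (hη3 : η 3 = t⁻¹)
    (w : List (Fin 4))
    (hpre : ∀ i, (w.take i).count 3 ≤ (w.take i).count 2) :
    ∃ c : G, evalWord η w = of c * t ^ (w.count 2 - w.count 3 : ℕ) := by
  induction w using List.reverseRecOn with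
  | nil => exact ⟨1, by simp [evalWord]⟩
  | append_singleton u x ih =>
    have hpre_u : ∀ i, (u.take i).count 3 ≤ (u.take i).count 2 := by
      intro i
      rcases le_or_gt i u.length with h | h
      · have := hpre i
        rwa [List.take_append_of_le_length h] at this
      · rw [List.take_of_length_le h.le]
        have := hpre u.length
        rwa [List.take_append_of_le_length le_rfl, List.take_length] at this
    obtain ⟨c, hc⟩ := ih hpre_u
    have hbal : u.count 3 ≤ u.count 2 := by
      have := hpre_u u.length
      rwa [List.take_length] at this
    have heval : ∀ y : Fin 4, evalWord η (u ++ [y]) = evalWord η u * η y := by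
      intro y; simp [evalWord]
    have hx : x = 0 ∨ x = 1 ∨ x = 2 ∨ x = 3 := fin4_eq x
    rcases hx with rfl | rfl | rfl | rfl
    · -- x = 0
      have h2 : (u ++ [(0 : Fin 4)]).count 2 = u.count 2 := by simp
      have h3 : (u ++ [(0 : Fin 4)]).count 3 = u.count 3 := by simp
      obtain ⟨c₂, hc₂⟩ := t_pow_mul_of (φ := φ) hA (u.count 2 - u.count 3) g0
      refine ⟨c * c₂, ?_⟩
      rw [heval _, hη0, hc, h2, h3, mul_assoc, hc₂, ← mul_assoc, ← map_mul]
    · -- x = 1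
      have h2 : (u ++ [(1 : Fin 4)]).count 2 = u.count 2 := by simp
      have h3 : (u ++ [(1 : Fin 4)]).count 3 = u.count 3 := by simp
      obtain ⟨c₂, hc₂⟩ := t_pow_mul_of (φ := φ) hA (u.count 2 - u.count 3) g0⁻¹
      refine ⟨c * c₂, ?_⟩
      rw [heval _, hη1, ← map_inv, hc, h2, h3, mul_assoc, hc₂, ← mul_assoc, ← map_mul]
    · -- x = 2
      have h2 : (u ++ [(2 : Fin 4)]).count 2 = u.count 2 + 1 := by simp
      have h3 : (u ++ [(2 : Fin 4)]).count 3 = u.count 3 := by simp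
      refine ⟨c, ?_⟩
      rw [heval _, hη2, hc, h2, h3, mul_assoc, ← pow_succ]
      congr 2
      omega
    · -- x = 3
      have h2 : (u ++ [(3 : Fin 4)]).count 2 = u.count 2 := by simp
      have h3 : (u ++ [(3 : Fin 4)]).count 3 = u.count 3 + 1 := by simp
      have hk1 : u.count 3 + 1 ≤ u.count 2 := by
        have := hpre (u.length + 1)
        rwa [List.take_of_length_le (by simp), List.count_append, List.count_append,
          List.count_singleton', List.count_singleton'] at this
        -- may need adjustment
      refine ⟨c, ?_⟩
      rw [heval _, hη3, hc, h2, h3]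
      have hsplit : u.count 2 - u.count 3 = (u.count 2 - (u.count 3 + 1)) + 1 := by omega
      rw [hsplit, pow_succ, mul_assoc, mul_assoc]
      simp

end BSLow

namespace BSComb

/-- Interleave t-letters `ds` and a-letters `bs` according to shape `c`. -/
def assemble : List Bool → List (Fin 4) → List (Fin 4) → List (Fin 4)
  | [], _, _ => []
  | true :: c, d :: ds, bs => d :: assemble c ds bs
  | true :: c, [], bs => assemble c [] bs
  | false :: c, ds, b :: bs => b :: assemble c ds bs
  | false :: c, ds, [] => assemble c ds []

lemma length_assemble : ∀ (c : List Bool) (ds bs : List (Fin 4)),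
    ds.length = c.count true → bs.length = c.count false →
    (assemble c ds bs).length = c.length
  | [], _, _, _, _ => rfl
  | true :: c, d :: ds, bs, hd, hb => by
    rw [assemble, List.length_cons, List.length_cons,
      length_assemble c ds bs (by simpa using hd) (by simpa using hb)]
  | true :: c, [], bs, hd, hb => by simp at hd
  | false :: c, ds, b :: bs, hd, hb => by
    rw [assemble, List.length_cons, List.length_cons,
      length_assemble c ds bs (by simpa using hd) (by simpa using hb)]
  | false :: c, ds, [], hd, hb => by simp at hb

lemma count_assemble (x : Fin 4) : ∀ (c : List Bool) (ds bs : List (Fin 4)),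
    ds.length = c.count true → bs.length = c.count false →
    (assemble c ds bs).count x = ds.count x + bs.count x
  | [], ds, bs, hd, hb => by
    simp at hd hb
    simp [assemble, hd, hb]
  | true :: c, d :: ds, bs, hd, hb => by
    rw [assemble, List.count_cons, List.count_cons,
      count_assemble x c ds bs (by simpa using hd) (by simpa using hb)]
    ring
  | true :: c, [], bs, hd, hb => by simp at hd
  | false :: c, ds, b :: bs, hd, hb => by
    rw [assemble, List.count_cons, List.count_cons,
      count_assemble x c ds bs (by simpa using hd) (by simpa using hb)]
    ring
  | false :: c, ds, [], hd, hb => by simp at hb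

lemma prefix_assemble : ∀ (c : List Bool) (ds bs : List (Fin 4)) (Bd : ℕ),
    (∀ i, (ds.take i).count 3 ≤ Bd + (ds.take i).count 2) →
    (∀ b ∈ bs, b = 0 ∨ b = 1) →
    ∀ i, ((assemble c ds bs).take i).count 3 ≤ Bd + ((assemble c ds bs).take i).count 2
  | [], ds, bs, Bd, hds, hbs, i => by simp [assemble]
  | true :: c, d :: ds, bs, Bd, hds, hbs, i => by
    cases i with
    | zero => simp
    | succ i =>
      rw [assemble, List.take_succ_cons, List.count_cons, List.count_cons]
      simp only [beq_iff_eq]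
      have h1 := hds 1
      simp only [List.take_succ_cons, List.take_zero, List.count_cons, List.count_nil,
        beq_iff_eq] at h1
      have key := prefix_assemble c ds bs (Bd + (if d = 2 then 1 else 0) - (if d = 3 then 1 else 0))
        (fun j => by
          have := hds (j + 1)
          simp only [List.take_succ_cons, List.count_cons, beq_iff_eq] at this
          omega)
        hbs i
      omega
  | true :: c, [], bs, Bd, hds, hbs, i => by
    rw [assemble]
    exact prefix_assemble c [] bs Bd (fun j => by simp) hbs i
  | false :: c, ds, b :: bs, Bd, hds, hbs, i => by
    cases i with
    | zero => simp
    | succ i =>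
      rw [assemble, List.take_succ_cons, List.count_cons, List.count_cons]
      simp only [beq_iff_eq]
      have hb01 : b = 0 ∨ b = 1 := hbs b (by simp)
      have hb2 : ¬ (b = 2) := by rcases hb01 with rfl | rfl <;> decide
      have hb3 : ¬ (b = 3) := by rcases hb01 with rfl | rfl <;> decide
      have key := prefix_assemble c ds bs Bd hds (fun x hx => hbs x (by simp [hx])) i
      simp only [if_neg hb2, if_neg hb3]
      omega
  | false :: c, ds, [], Bd, hds, hbs, i => by
    rw [assemble]
    exact prefix_assemble c ds [] Bd hds (fun x hx => by simp at hx) i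

/-- Whether a letter is a t-letter. -/
def isT (y : Fin 4) : Bool := y == 2 || y == 3

lemma map_isT_assemble : ∀ (c : List Bool) (ds bs : List (Fin 4)),
    ds.length = c.count true → bs.length = c.count false →
    (∀ d ∈ ds, d = 2 ∨ d = 3) → (∀ b ∈ bs, b = 0 ∨ b = 1) →
    (assemble c ds bs).map isT = c
  | [], _, _, _, _, _, _ => rfl
  | true :: c, d :: ds, bs, hd, hb, hds, hbs => by
    rw [assemble, List.map_cons,
      map_isT_assemble c ds bs (by simpa using hd) (by simpa using hb)
        (fun x hx => hds x (by simp [hx])) hbs]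
    have : isT d = true := by
      rcases hds d (by simp) with rfl | rfl <;> decide
    rw [this]
  | true :: c, [], bs, hd, _, _, _ => by simp at hd
  | false :: c, ds, b :: bs, hd, hb, hds, hbs => by
    rw [assemble, List.map_cons,
      map_isT_assemble c ds bs (by simpa using hd) (by simpa using hb)
        hds (fun x hx => hbs x (by simp [hx]))]
    have : isT b = false := by
      rcases hbs b (by simp) with rfl | rfl <;> decide
    rw [this]
  | false :: c, ds, [], _, hb, _, _ => by simp at hb

lemma filter_isT_assemble : ∀ (c : List Bool) (ds bs : List (Fin 4)),
    ds.length = c.count true → bs.length = c.count false →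
    (∀ d ∈ ds, d = 2 ∨ d = 3) → (∀ b ∈ bs, b = 0 ∨ b = 1) →
    (assemble c ds bs).filter isT = ds
  | [], ds, bs, hd, hb, _, _ => by
    simp at hd
    simp [assemble, hd]
  | true :: c, d :: ds, bs, hd, hb, hds, hbs => by
    rw [assemble, List.filter_cons]
    have : isT d = true := by
      rcases hds d (by simp) with rfl | rfl <;> decide
    rw [if_pos (by simp [this]),
      filter_isT_assemble c ds bs (by simpa using hd) (by simpa using hb)
        (fun x hx => hds x (by simp [hx])) hbs]
  | true :: c, [], bs, hd, _, _, _ => by simp at hd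
  | false :: c, ds, b :: bs, hd, hb, hds, hbs => by
    rw [assemble, List.filter_cons]
    have : isT b = false := by
      rcases hbs b (by simp) with rfl | rfl <;> decide
    rw [if_neg (by simp [this]),
      filter_isT_assemble c ds bs (by simpa using hd) (by simpa using hb)
        hds (fun x hx => hbs x (by simp [hx]))]
  | false :: c, ds, [], _, hb, _, _ => by simp at hb

lemma filter_notT_assemble : ∀ (c : List Bool) (ds bs : List (Fin 4)),
    ds.length = c.count true → bs.length = c.count false →
    (∀ d ∈ ds, d = 2 ∨ d = 3) → (∀ b ∈ bs, b = 0 ∨ b = 1) →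
    (assemble c ds bs).filter (fun y => ! isT y) = bs
  | [], ds, bs, hd, hb, _, _ => by
    simp at hb
    simp [assemble, hb]
  | true :: c, d :: ds, bs, hd, hb, hds, hbs => by
    rw [assemble, List.filter_cons]
    have : isT d = true := by
      rcases hds d (by simp) with rfl | rfl <;> decide
    rw [if_neg (by simp [this]),
      filter_notT_assemble c ds bs (by simpa using hd) (by simpa using hb)
        (fun x hx => hds x (by simp [hx])) hbs]
  | true :: c, [], bs, hd, _, _, _ => by simp at hd
  | false :: c, ds, b :: bs, hd, hb, hds, hbs => by
    rw [assemble, List.filter_cons]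
    have : isT b = false := by
      rcases hbs b (by simp) with rfl | rfl <;> decide
    rw [if_pos (by simp [this]),
      filter_notT_assemble c ds bs (by simpa using hd) (by simpa using hb)
        hds (fun x hx => hbs x (by simp [hx]))]
  | false :: c, ds, [], _, hb, _, _ => by simp at hb

end BSComb

namespace BSCount
open BSComb

lemma count_ofFn_eq_card : ∀ (n : ℕ) (f : Fin n → Bool),
    (List.ofFn f).count true = (Finset.univ.filter (fun i => f i = true)).card
  | 0, f => by simp
  | (n+1), f => by
    rw [List.ofFn_succ, List.count_cons, count_ofFn_eq_card n (fun i => f i.succ),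
      Finset.card_filter (fun i : Fin (n+1) => f i = true) Finset.univ, Fin.sum_univ_succ,
      ← Finset.card_filter]
    simp only [beq_iff_eq]
    omega

lemma count_true_add_count_false : ∀ l : List Bool,
    l.count true + l.count false = l.length
  | [] => rfl
  | a :: l => by
    have := count_true_add_count_false l
    cases a <;> simp [List.count_cons] <;> omega

/-- Conversion from Dyck steps to letters. -/
def cnv : DyckStep → Fin 4
  | DyckStep.U => 2
  | DyckStep.D => 3

lemma cnv_injective : Function.Injective cnv := by
  intro a b hab
  cases a <;> cases b <;> simp [cnv] at hab ⊢

lemma count_cnv_U (l : List DyckStep) : (l.map cnv).count 2 = l.count DyckStep.U := by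
  have := List.count_map_of_injective l cnv cnv_injective DyckStep.U
  simpa [cnv] using this

lemma count_cnv_D (l : List DyckStep) : (l.map cnv).count 3 = l.count DyckStep.D := by
  have := List.count_map_of_injective l cnv cnv_injective DyckStep.D
  simpa [cnv] using this

lemma mem_cnv (l : List DyckStep) : ∀ d ∈ l.map cnv, d = 2 ∨ d = 3 := by
  intro d hd
  rw [List.mem_map] at hd
  obtain ⟨a, -, rfl⟩ := hd
  cases a <;> simp [cnv]

end BSCount

namespace BSCount
open BSComb

lemma finite_words {α : Type*} [Fintype α] (L : Set (List α)) (n : ℕ) :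
    Finite {w : List α // w ∈ L ∧ w.length = n} := by
  apply Finite.of_injective
    (f := fun w : {w : List α // w ∈ L ∧ w.length = n} =>
      (fun i => w.1.get (Fin.cast w.2.2.symm i) : Fin n → α))
  intro w w' hww
  apply Subtype.ext
  have h2 := congrArg List.ofFn hww
  rwa [BSAux3.ofFn_get_cast _ w.2.2, BSAux3.ofFn_get_cast _ w'.2.2] at h2

lemma castLE_fin2 : ∀ v : Fin 2, (Fin.castLE (by norm_num : 2 ≤ 4) v : Fin 4) = 0 ∨
    (Fin.castLE (by norm_num : 2 ≤ 4) v : Fin 4) = 1 := by decide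

variable {G : Type u_1} [Group G] {A B : Subgroup G} {φ : A ≃* B}

lemma wordCount_lower (hA : ∀ c : G, c ∈ A)
    (η : Fin 4 → HNNExtension G A B φ) (g0 : G)
    (hη0 : η 0 = of g0) (hη1 : η 1 = (of g0)⁻¹) (hη2 : η 2 = t) (hη3 : η 3 = t⁻¹)
    (n m : ℕ) (hnm : n = 4 * m) :
    n.choose (2*m) * catalan m * 2^(n - 2*m) ≤
      wordCount {w : List (Fin 4) | evalWord η w ∈
        (of : G →* HNNExtension G A B φ).range} n := by
  classical
  set L := {w : List (Fin 4) | evalWord η w ∈ (of : G →* HNNExtension G A B φ).range} with hL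
  have hfin : Finite {w : List (Fin 4) // w ∈ L ∧ w.length = n} := finite_words L n
  -- the domain of the injection
  set Dom := {s : Finset (Fin n) // s ∈ Finset.powersetCard (2*m) (Finset.univ : Finset (Fin n))}
    × ({dy : DyckWord // dy.semilength = m} × (Fin (n - 2*m) → Fin 2)) with hDom
  -- cardinality of the domain
  have hcard : Nat.card Dom = n.choose (2*m) * (catalan m * 2^(n - 2*m)) := by
    rw [hDom, Nat.card_prod, Nat.card_prod]
    congr 1
    · rw [Nat.card_eq_fintype_card, Fintype.card_coe, Finset.card_powersetCard,
        Finset.card_univ, Fintype.card_fin]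
    · congr 1
      · rw [Nat.card_eq_fintype_card, DyckWord.card_dyckWord_semilength_eq_catalan]
      · rw [Nat.card_eq_fintype_card, Fintype.card_fun, Fintype.card_fin, Fintype.card_fin]
  -- the assembled word associated to a domain element
  have hword : ∀ x : Dom,
      (assemble (List.ofFn (fun i : Fin n => decide (i ∈ x.1.1)))
        (x.2.1.1.toList.map cnv)
        (List.ofFn (fun j => (Fin.castLE (by norm_num) (x.2.2 j) : Fin 4)))) ∈ L ∧
      (assemble (List.ofFn (fun i : Fin n => decide (i ∈ x.1.1)))
        (x.2.1.1.toList.map cnv)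
        (List.ofFn (fun j => (Fin.castLE (by norm_num) (x.2.2 j) : Fin 4)))).length = n := by
    rintro ⟨⟨s, hs⟩, ⟨dy, hdy⟩, b⟩
    obtain ⟨-, hscard⟩ := Finset.mem_powersetCard.1 hs
    set shape := List.ofFn (fun i : Fin n => decide (i ∈ s)) with hshape
    set ds := dy.toList.map cnv with hds
    set bits := List.ofFn (fun j => (Fin.castLE (by norm_num) (b j) : Fin 4)) with hbits
    have hfilter : (Finset.univ.filter (fun i : Fin n => decide (i ∈ s) = true)) = s := by
      ext i; simp
    have hct : shape.count true = 2*m := by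
      rw [hshape, count_ofFn_eq_card, hfilter, hscard]
    have hlshape : shape.length = n := by simp [hshape]
    have hcf : shape.count false = n - 2*m := by
      have := count_true_add_count_false shape
      rw [hct, hlshape] at this
      omega
    have hdlen : ds.length = shape.count true := by
      rw [hds, List.length_map, ← dy.two_mul_semilength_eq_length, hdy, hct]
    have hblen : bits.length = shape.count false := by
      rw [hbits, List.length_ofFn, hcf]
    have hbs01 : ∀ y ∈ bits, y = 0 ∨ y = 1 := by
      intro y hy
      rw [hbits, List.mem_ofFn] at hy
      obtain ⟨j, rfl⟩ := hy
      exact castLE_fin2 (b j)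
    have hds23 : ∀ d ∈ ds, d = 2 ∨ d = 3 := mem_cnv _
    have hc2bits : bits.count 2 = 0 := by
      rw [List.count_eq_zero]
      intro hmem
      rcases hbs01 _ hmem with h | h <;> simp at h
    have hc3bits : bits.count 3 = 0 := by
      rw [List.count_eq_zero]
      intro hmem
      rcases hbs01 _ hmem with h | h <;> simp at h
    have hc2 : (assemble shape ds bits).count 2 = m := by
      rw [count_assemble 2 shape ds bits hdlen hblen, hc2bits, hds, count_cnv_U, add_zero,
        ← DyckWord.semilength, hdy]
    have hc3 : (assemble shape ds bits).count 3 = m := by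
      rw [count_assemble 3 shape ds bits hdlen hblen, hc3bits, hds, count_cnv_D, add_zero,
        ← dy.semilength_eq_count_D, hdy]
    have hpre : ∀ i, ((assemble shape ds bits).take i).count 3 ≤
        ((assemble shape ds bits).take i).count 2 := by
      intro i
      have := prefix_assemble shape ds bits 0
        (fun j => by
          rw [hds, ← List.map_take, count_cnv_U, count_cnv_D, zero_add]
          exact dy.count_D_le_count_U j)
        hbs01 i
      omega
    constructor
    · obtain ⟨c, hc⟩ := BSLow.eval_dyck hA η g0 hη0 hη1 hη2 hη3 _ hpre
      rw [hL]
      simp only [Set.mem_setOf_eq]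
      rw [hc, hc2, hc3]
      simp
    · rw [length_assemble shape ds bits hdlen hblen, hlshape]
  -- the injection
  rw [mul_assoc, ← hcard]
  apply Nat.card_le_card_of_injective
    (f := fun x : Dom =>
      (⟨assemble (List.ofFn (fun i : Fin n => decide (i ∈ x.1.1)))
        (x.2.1.1.toList.map cnv)
        (List.ofFn (fun j => (Fin.castLE (by norm_num) (x.2.2 j) : Fin 4))),
        hword x⟩ : {w : List (Fin 4) // w ∈ L ∧ w.length = n}))
  rintro ⟨⟨s, hs⟩, ⟨dy, hdy⟩, b⟩ ⟨⟨s', hs'⟩, ⟨dy', hdy'⟩, b'⟩ hxy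
  have hw : assemble (List.ofFn (fun i : Fin n => decide (i ∈ s)))
        (dy.toList.map cnv) (List.ofFn (fun j => (Fin.castLE (by norm_num) (b j) : Fin 4)))
      = assemble (List.ofFn (fun i : Fin n => decide (i ∈ s')))
        (dy'.toList.map cnv)
        (List.ofFn (fun j => (Fin.castLE (by norm_num) (b' j) : Fin 4))) :=
    congrArg Subtype.val hxy
  obtain ⟨-, hscard⟩ := Finset.mem_powersetCard.1 hs
  obtain ⟨-, hscard'⟩ := Finset.mem_powersetCard.1 hs'
  have hprep : ∀ (s₀ : Finset (Fin n)) (dy₀ : DyckWord) (b₀ : Fin (n - 2*m) → Fin 2),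
      s₀.card = 2*m → dy₀.semilength = m →
      (dy₀.toList.map cnv).length
          = (List.ofFn (fun i : Fin n => decide (i ∈ s₀))).count true ∧
      (List.ofFn (fun j => (Fin.castLE (by norm_num) (b₀ j) : Fin 4))).length
          = (List.ofFn (fun i : Fin n => decide (i ∈ s₀))).count false ∧
      (∀ d ∈ dy₀.toList.map cnv, d = 2 ∨ d = 3) ∧
      (∀ y ∈ (List.ofFn (fun j => (Fin.castLE (by norm_num) (b₀ j) : Fin 4))),
        y = 0 ∨ y = 1) := by
    intro s₀ dy₀ b₀ hcard₀ hsemi₀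
    have hfilter₀ : (Finset.univ.filter (fun i : Fin n => decide (i ∈ s₀) = true)) = s₀ := by
      ext i; simp
    have hct₀ : (List.ofFn (fun i : Fin n => decide (i ∈ s₀))).count true = 2*m := by
      rw [count_ofFn_eq_card, hfilter₀, hcard₀]
    have hcf₀ : (List.ofFn (fun i : Fin n => decide (i ∈ s₀))).count false = n - 2*m := by
      have := count_true_add_count_false (List.ofFn (fun i : Fin n => decide (i ∈ s₀)))
      rw [hct₀] at this
      simp only [List.length_ofFn] at this
      omega
    refine ⟨?_, ?_, mem_cnv _, ?_⟩
    · rw [List.length_map, ← dy₀.two_mul_semilength_eq_length, hsemi₀, hct₀]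
    · rw [List.length_ofFn, hcf₀]
    · intro y hy
      rw [List.mem_ofFn] at hy
      obtain ⟨j, rfl⟩ := hy
      exact castLE_fin2 (b₀ j)
  obtain ⟨hd1, hb1, hds1, hbs1⟩ := hprep s dy b hscard hdy
  obtain ⟨hd2, hb2, hds2, hbs2⟩ := hprep s' dy' b' hscard' hdy'
  have hshape_eq : List.ofFn (fun i : Fin n => decide (i ∈ s))
      = List.ofFn (fun i : Fin n => decide (i ∈ s')) := by
    have e1 := map_isT_assemble _ _ _ hd1 hb1 hds1 hbs1
    have e2 := map_isT_assemble _ _ _ hd2 hb2 hds2 hbs2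
    rw [← e1, ← e2, hw]
  have hs_eq : s = s' := by
    have h := List.ofFn_injective hshape_eq
    ext i
    have hi := congrFun h i
    simpa using hi
  have hds_eq : dy.toList.map cnv = dy'.toList.map cnv := by
    have e1 := filter_isT_assemble _ _ _ hd1 hb1 hds1 hbs1
    have e2 := filter_isT_assemble _ _ _ hd2 hb2 hds2 hbs2
    rw [← e1, ← e2, hw]
  have hdy_eq : dy = dy' := by
    apply DyckWord.ext
    exact List.map_injective_iff.2 cnv_injective hds_eq
  have hbits_eq : (List.ofFn (fun j => (Fin.castLE (by norm_num) (b j) : Fin 4)))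
      = (List.ofFn (fun j => (Fin.castLE (by norm_num) (b' j) : Fin 4))) := by
    have e1 := filter_notT_assemble _ _ _ hd1 hb1 hds1 hbs1
    have e2 := filter_notT_assemble _ _ _ hd2 hb2 hds2 hbs2
    rw [← e1, ← e2, hw]
  have hb_eq : b = b' := by
    have h := List.ofFn_injective hbits_eq
    funext j
    have hj := congrFun h j
    exact Fin.castLE_injective _ hj
  subst hs_eq hdy_eq hb_eq
  rfl

end BSCount

namespace BSFinal
open BSAux BSAux2 BSAux3 BSLow BSComb BSCount BSAux4

lemma nat_ineq (m : ℕ) (hm : 4 ≤ m) :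
    4^(4*m) ≤ (4*m+1)^3 * ((4*m).choose (2*m) * catalan m * 2^(4*m - 2*m)) := by
  have hbinom : (4*m).choose (2*m) = Nat.centralBinom (2*m) := by
    rw [Nat.centralBinom_eq_two_mul_choose]
    congr 1
    ring
  have h1 : 4^(2*m) ≤ 2*m * (4*m).choose (2*m) := by
    rw [hbinom]
    exact (Nat.four_pow_lt_mul_centralBinom (2*m) (by omega)).le
  have h2 : 4^m ≤ m * ((m+1) * catalan m) := by
    have hle := (Nat.four_pow_lt_mul_centralBinom m (by omega)).le
    have hsc : (m+1) * catalan m = Nat.centralBinom m := succ_mul_catalan_eq_centralBinom m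
    rw [hsc]
    exact hle
  have h3 : 2^(4*m - 2*m) = 4^m := by
    have : 4*m - 2*m = 2*m := by omega
    rw [this, show (4:ℕ) = 2^2 from rfl, ← pow_mul]
  have hsplit : (4:ℕ)^(4*m) = 4^(2*m) * 4^m * 4^m := by
    rw [← pow_add, ← pow_add]
    congr 1
    ring
  calc (4:ℕ)^(4*m) = 4^(2*m) * 4^m * 4^m := hsplit
    _ ≤ (2*m * (4*m).choose (2*m)) * (m * ((m+1) * catalan m)) * 4^m := by
        exact Nat.mul_le_mul (Nat.mul_le_mul h1 h2) le_rfl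
    _ = (2*m * m * (m+1)) * ((4*m).choose (2*m) * catalan m * 4^m) := by ring
    _ ≤ (4*m+1)^3 * ((4*m).choose (2*m) * catalan m * 4^m) := by
        apply Nat.mul_le_mul_right
        calc 2*m*m*(m+1) ≤ (4*m+1)*(4*m+1)*(4*m+1) := by
              exact Nat.mul_le_mul (Nat.mul_le_mul (by omega) (by omega)) (by omega)
          _ = (4*m+1)^3 := by ring
    _ = (4*m+1)^3 * ((4*m).choose (2*m) * catalan m * 2^(4*m - 2*m)) := by rw [h3]

lemma mem_bsSub_one (c : Multiplicative ℤ) : c ∈ bsSub 1 := by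
  rw [Subgroup.mem_zpowers_iff]
  refine ⟨Multiplicative.toAdd c, ?_⟩
  apply Multiplicative.toAdd.injective
  rw [toAdd_zpow, pow_one, toAdd_ofAdd]
  simp

theorem dir_lt (q : ℕ)
    (φ : bsSub 1 ≃* bsSub q)
    (η : Fin 4 → HNNExtension (Multiplicative ℤ) (bsSub 1) (bsSub q) φ)
    (hη : η = ![HNNExtension.of bsGen, (HNNExtension.of bsGen :
        HNNExtension (Multiplicative ℤ) (bsSub 1) (bsSub q) φ)⁻¹,
      HNNExtension.t, (HNNExtension.t : HNNExtension (Multiplicative ℤ) (bsSub 1) (bsSub q) φ)⁻¹]) :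
    ¬ StronglyNegligible {w : List (Fin 4) | evalWord η w ∈
        (HNNExtension.of :
          Multiplicative ℤ →* HNNExtension (Multiplicative ℤ) (bsSub 1) (bsSub q) φ).range} := by
  rintro ⟨C, ρ, hC, hρ0, hρ1, hbound⟩
  have hη0 : η 0 = of bsGen := by rw [hη]; rfl
  have hη1 : η 1 = (of bsGen :
      HNNExtension (Multiplicative ℤ) (bsSub 1) (bsSub q) φ)⁻¹ := by rw [hη]; rfl
  have hη2 : η 2 = (t : HNNExtension (Multiplicative ℤ) (bsSub 1) (bsSub q) φ) := by
    rw [hη]; rfl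
  have hη3 : η 3 = (t : HNNExtension (Multiplicative ℤ) (bsSub 1) (bsSub q) φ)⁻¹ := by
    rw [hη]; rfl
  have hkey : ∀ m : ℕ, 4 ≤ m → (1:ℝ) ≤ C * ρ^(4*m) * (((4*m : ℕ) : ℝ)+1)^3 := by
    intro m hm
    have hlow := wordCount_lower mem_bsSub_one η bsGen hη0 hη1 hη2 hη3 (4*m) m rfl
    have hni := nat_ineq m hm
    have hb := hbound (4*m)
    rw [Fintype.card_fin] at hb
    -- chain in ℕ then cast
    have hnat : 4^(4*m) ≤ (4*m+1)^3 * wordCount {w : List (Fin 4) | evalWord η w ∈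
        (HNNExtension.of :
          Multiplicative ℤ →* HNNExtension (Multiplicative ℤ) (bsSub 1) (bsSub q) φ).range}
        (4*m) := by
      calc (4:ℕ)^(4*m) ≤ (4*m+1)^3 * ((4*m).choose (2*m) * catalan m * 2^(4*m - 2*m)) :=
            hni
        _ ≤ _ := Nat.mul_le_mul_left _ hlow
    have hreal : ((4:ℝ))^(4*m) ≤ (((4*m : ℕ):ℝ)+1)^3 * (wordCount {w : List (Fin 4) |
        evalWord η w ∈ (HNNExtension.of : Multiplicative ℤ →*
          HNNExtension (Multiplicative ℤ) (bsSub 1) (bsSub q) φ).range} (4*m) : ℝ) := by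
      have := Nat.cast_le (α := ℝ).2 hnat
      push_cast at this ⊢
      convert this using 2 <;> push_cast <;> ring
    have h4 : (0:ℝ) < (4:ℝ)^(4*m) := by positivity
    have hchain : ((4:ℝ))^(4*m) ≤ (((4*m:ℕ):ℝ)+1)^3 * (C * ρ^(4*m) * (4:ℝ)^(4*m)) := by
      refine le_trans hreal ?_
      apply mul_le_mul_of_nonneg_left hb (by positivity)
    have h5 : (4:ℝ)^(4*m) * 1 ≤ (4:ℝ)^(4*m) * (C * ρ^(4*m) * (((4*m:ℕ):ℝ)+1)^3) := by
      rw [mul_one]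
      calc ((4:ℝ))^(4*m) ≤ (((4*m:ℕ):ℝ)+1)^3 * (C * ρ^(4*m) * (4:ℝ)^(4*m)) := hchain
        _ = (4:ℝ)^(4*m) * (C * ρ^(4*m) * (((4*m:ℕ):ℝ)+1)^3) := by ring
    exact le_of_mul_le_mul_left h5 h4
  -- limit argument
  have h0 : Filter.Tendsto (fun k : ℕ => ((k:ℝ))^3 * ρ^k) Filter.atTop (nhds 0) := by
    have hsum : Summable (fun k : ℕ => ((k:ℝ))^3 * ρ^k) :=
      summable_pow_mul_geometric_of_norm_lt_one 3
        (by rwa [Real.norm_eq_abs, abs_of_pos hρ0])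
    exact hsum.tendsto_atTop_zero
  have h1 : Filter.Tendsto (fun k : ℕ => C * ρ^k * ((k:ℝ)+1)^3) Filter.atTop (nhds 0) := by
    have hshift : Filter.Tendsto (fun k : ℕ => (((k+1:ℕ)):ℝ)^3 * ρ^(k+1))
        Filter.atTop (nhds 0) := h0.comp (Filter.tendsto_add_atTop_nat 1)
    have h2' : Filter.Tendsto (fun k : ℕ => (C/ρ) * ((((k+1:ℕ)):ℝ)^3 * ρ^(k+1)))
        Filter.atTop (nhds ((C/ρ) * 0)) := hshift.const_mul _
    rw [mul_zero] at h2'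
    apply h2'.congr
    intro k
    push_cast
    field_simp
    ring
  have hev : ∀ᶠ k : ℕ in Filter.atTop, C * ρ^k * ((k:ℝ)+1)^3 < 1 :=
    h1.eventually_lt_const one_pos
  obtain ⟨N, hN⟩ := Filter.eventually_atTop.1 hev
  have hm4 : 4 ≤ max N 4 := le_max_right _ _
  have hNle : N ≤ 4 * max N 4 := by
    have := le_max_left N 4
    omega
  have hcontr := hN (4 * max N 4) hNle
  have := hkey (max N 4) hm4
  rw [Nat.cast_mul] at this
  push_cast at this hcontr
  linarith

end BSFinal

end BSMachinery

/-- Let `1 ≤ p ≤ q` and let `BS(p,q)` be realized as the HNN extension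
of `H = ⟨a⟩ ≅ ℤ` with associated subgroups `A = ⟨aᵖ⟩`, `B = ⟨a^q⟩` and isomorphism
`aᵖ ↦ a^q`. Over the symmetric generating set `Σ = {a, a⁻¹, t, t⁻¹}`, the set of words
representing an element of the subgroup `⟨a⟩` of `BS(p,q)` is strongly negligible iff
`p ≥ 2`. -/
theorem stmt_15 (p q : ℕ) (hp : 1 ≤ p) (hpq : p ≤ q)
    (φ : bsSub p ≃* bsSub q)
    (hφ : (φ ⟨bsGen ^ p, Subgroup.mem_zpowers _⟩ : Multiplicative ℤ) = bsGen ^ q)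
    (η : Fin 4 → HNNExtension (Multiplicative ℤ) (bsSub p) (bsSub q) φ)
    (hη : η = ![HNNExtension.of bsGen, (HNNExtension.of bsGen :
        HNNExtension (Multiplicative ℤ) (bsSub p) (bsSub q) φ)⁻¹,
      HNNExtension.t, (HNNExtension.t : HNNExtension (Multiplicative ℤ) (bsSub p) (bsSub q) φ)⁻¹]) :
    StronglyNegligible {w : List (Fin 4) | evalWord η w ∈
        (HNNExtension.of :
          Multiplicative ℤ →* HNNExtension (Multiplicative ℤ) (bsSub p) (bsSub q) φ).range} ↔
      2 ≤ p := by
  constructor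
  · intro hSN
    by_contra hlt
    have hp1 : p = 1 := by omega
    subst hp1
    exact BSFinal.dir_lt q φ η hη hSN
  · intro hp2
    exact BSAux4.dir_ge p q hp2 hpq φ η hη
end

section
/- Let G = ⟨H, t | t a t⁻¹ = φ(a) for a ∈ A⟩ be an HNN extension with [H : A] ≥ 2 and [H : B] ≥ 2, let η : Σ → G be a finite symmetric generating set, and let d denote the word metric on the right coset space H\G of the canonical image of H (where d(Hg, Hg') is the least length of a word w over Σ with Hg·(element represented by w) = Hg'). Then there exist a map f : H\G → H\G and a constant k ∈ ℕ such that d(f(x), x) ≤ k for every coset x, and every fiber f⁻¹(x) contains at least 2 elements; that is, the Schreier graph of G with respect to H satisfies the Gromov condition. -/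
universe u

open Monoid

/-- The word metric on the right coset space `P\G`: the least length of a word `w` over
`α` such that `Pg·(evalWord η w) = Pg'`. -/
noncomputable def cosetDist {G : Type*} [Group G] (P : Subgroup G) {α : Type*}
    (η : α → G) (x y : Quotient (QuotientGroup.rightRel P)) : ℕ :=
  sInf {n : ℕ | ∃ w : List α, w.length = n ∧ ∃ g : G,
    x = Quotient.mk (QuotientGroup.rightRel P) g ∧
    y = Quotient.mk (QuotientGroup.rightRel P) (g * evalWord η w)}

/-!
Right cosets `H g` of the base group correspond to the syllable lists `(ε₁, g₁) … (εₙ, gₙ)` of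
normal forms `t^ε₁ g₁ ⋯ t^εₙ gₙ` (with `gᵢ` in fixed transversals of `A`, `B`). Appending one
syllable `t^ε r`, with `ε = εₙ`, never produces a pinch, so it yields the normal form of
`H g t^ε r`. As the indices are at least `2`, each transversal contains two distinct `r₀ ≠ r₁`;
the two resulting maps `H g ↦ H g t^ε rᵢ` are injective with disjoint images, and they move
cosets by one of finitely many right multipliers, hence a bounded distance. Sending both
images back to their preimage and fixing everything else gives the required map.
-/

section CosetDist

variable {G : Type*} [Group G] {α : Type*}

theorem exists_evalWord_eq {η : α → G} {inv : α → α} (hsym : IsSymmetricGen η inv) (g : G) :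
    ∃ w : List α, evalWord η w = g := by
  have hg : g ∈ (Subgroup.closure (Set.range η)).toSubmonoid := by
    rw [hsym.2.2.2]; trivial
  rw [Subgroup.closure_toSubmonoid] at hg
  induction hg using Submonoid.closure_induction with
  | mem x hx =>
    rcases hx with ⟨a, rfl⟩ | ⟨a, ha⟩
    · exact ⟨[a], by simp [evalWord]⟩
    · exact ⟨[inv a], by simp [evalWord, hsym.2.2.1, ha]⟩
  | one => exact ⟨[], rfl⟩
  | mul x y _ _ hx hy =>
    obtain ⟨u, rfl⟩ := hx
    obtain ⟨v, rfl⟩ := hy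
    exact ⟨u ++ v, by simp [evalWord]⟩

variable (P : Subgroup G) (η : α → G)

theorem cosetDist_mk_mul_evalWord_le (g : G) (w : List α) :
    cosetDist P η (Quotient.mk _ g) (Quotient.mk _ (g * evalWord η w)) ≤ w.length :=
  Nat.sInf_le ⟨w, rfl, g, rfl, rfl⟩

theorem cosetDist_self (x : Quotient (QuotientGroup.rightRel P)) : cosetDist P η x x = 0 := by
  induction x using Quotient.inductionOn with
  | h g => simpa [evalWord] using cosetDist_mk_mul_evalWord_le P η g []

theorem exists_cosetDist_mk_mul_le {inv : α → α} (hsym : IsSymmetricGen η inv)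
    {ι : Type*} [Fintype ι] (s : ι → G) :
    ∃ k, ∀ g i, cosetDist P η (Quotient.mk _ g) (Quotient.mk _ (g * s i)) ≤ k := by
  choose w hw using fun i => exists_evalWord_eq hsym (s i)
  refine ⟨Finset.univ.sup fun i => (w i).length, fun g i => ?_⟩
  rw [← hw i]
  exact (cosetDist_mk_mul_evalWord_le P η g (w i)).trans
    (Finset.le_sup (f := fun i => (w i).length) (Finset.mem_univ i))

end CosetDist

theorem exists_two_preimages_of_injective_of_disjoint {X : Type*} (R : X → X → Prop)
    (hR : ∀ x, R x x) {p q : X → X} (hp : p.Injective) (hq : q.Injective)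
    (hpq : ∀ x y, p x ≠ q y) (hRp : ∀ x, R x (p x)) (hRq : ∀ x, R x (q x)) :
    ∃ f : X → X, (∀ y, R (f y) y) ∧ ∀ x, ∃ y z, y ≠ z ∧ f y = x ∧ f z = x := by
  classical
  refine ⟨fun y => if h : ∃ x, p x = y then h.choose
    else if h' : ∃ x, q x = y then h'.choose else y, fun y => ?_, fun x => ?_⟩
  · dsimp only
    split_ifs with h h'
    · simpa only [h.choose_spec] using hRp h.choose
    · simpa only [h'.choose_spec] using hRq h'.choose
    · exact hR y
  · have hpx : ∃ x', p x' = p x := ⟨x, rfl⟩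
    have hqx : ∃ x', q x' = q x := ⟨x, rfl⟩
    have hqx_not : ¬∃ x', p x' = q x := fun ⟨x', h⟩ => hpq x' x h
    refine ⟨p x, q x, hpq x x, ?_, ?_⟩
    · simp only [dif_pos hpx]
      exact hp hpx.choose_spec
    · simp only [dif_neg hqx_not, dif_pos hqx]
      exact hq hqx.choose_spec

namespace HNNExtension

open NormalWord

variable {H : Type*} [Group H] {A B : Subgroup H} {φ : A ≃* B} {d : TransversalPair H A B}

theorem NormalWord.TransversalPair.exists_ne_mem_set (d : TransversalPair H A B) (u : ℤˣ)
    (hu : 2 ≤ Cardinal.mk (H ⧸ toSubgroup A B u)) : ∃ r₀ ∈ d.set u, ∃ r₁ ∈ d.set u, r₀ ≠ r₁ := by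
  rw [Cardinal.mk_congr ((QuotientGroup.quotientRightRelEquivQuotientLeftRel _).symm.trans
    (d.compl u).rightQuotientEquiv), Cardinal.two_le_iff] at hu
  obtain ⟨⟨r₀, h₀⟩, ⟨r₁, h₁⟩, hne⟩ := hu
  exact ⟨r₀, h₀, r₁, h₁, fun h => hne (Subtype.ext h)⟩

namespace NormalWord

/-- The exponent of the last letter `t^{±1}` of a word, or `1` for a word without `t`. -/
def lastSign (l : List (ℤˣ × H)) : ℤˣ :=
  (l.getLast?.map Prod.fst).getD 1

/-- Appending `t^ε g` with `ε` the last sign of `w` never creates a pinch `t^ε a t^{-ε}`. -/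
def appendSyllable (w : NormalWord d) (g : H) (hg : g ∈ d.set (lastSign w.toList)) :
    NormalWord d where
  head := w.head
  toList := w.toList ++ [(lastSign w.toList, g)]
  mem_set u g' hmem := by
    rcases List.mem_append.1 hmem with h | h
    · exact w.mem_set u g' h
    · obtain ⟨rfl, rfl⟩ := Prod.mk.inj (List.mem_singleton.1 h)
      exact hg
  chain := by
    refine List.isChain_append.2 ⟨w.chain, List.isChain_singleton _, fun x hx y hy _ => ?_⟩
    obtain rfl : (lastSign w.toList, g) = y := by simpa using hy
    simp [lastSign, Option.mem_def.1 hx]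

theorem prod_appendSyllable (w : NormalWord d) (g : H) (hg : g ∈ d.set (lastSign w.toList)) :
    (w.appendSyllable g hg).prod φ = w.prod φ * (t ^ (lastSign w.toList : ℤ) * of g) := by
  simp [appendSyllable, ReducedWord.prod, mul_assoc]

theorem toList_mul_smul_empty (x : HNNExtension H A B φ) (g : H)
    (hg : g ∈ d.set (lastSign (x • (empty : NormalWord d)).toList)) :
    ((x * (t ^ (lastSign (x • (empty : NormalWord d)).toList : ℤ) * of g)) •
        (empty : NormalWord d)).toList =
      (x • (empty : NormalWord d)).toList ++
        [(lastSign (x • (empty : NormalWord d)).toList, g)] := by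
  have hprod : ((x • (empty : NormalWord d)).appendSyllable g hg).prod φ =
      x * (t ^ (lastSign (x • (empty : NormalWord d)).toList : ℤ) * of g) := by
    rw [prod_appendSyllable, prod_smul, prod_empty, mul_one]
  rw [← hprod, prod_smul_empty]
  rfl

theorem rightRel_iff_toList_smul_empty_eq (x y : HNNExtension H A B φ) :
    QuotientGroup.rightRel (of : H →* HNNExtension H A B φ).range x y ↔
      (x • (empty : NormalWord d)).toList = (y • (empty : NormalWord d)).toList := by
  rw [QuotientGroup.rightRel_apply]
  constructor
  · rintro ⟨h, hh⟩
    rw [← eq_mul_inv_iff_mul_eq.1 hh, mul_smul, of_smul_eq_smul, group_smul_toList]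
  · intro hlist
    let h := (y • empty : NormalWord d).head * (x • empty : NormalWord d).head⁻¹
    have hxy : h • x • (empty : NormalWord d) = y • empty :=
      NormalWord.ext (by simp [h, group_smul_head]) hlist
    refine ⟨h, eq_mul_inv_of_mul_eq ?_⟩
    simpa [prod_group_smul] using congrArg (fun w : NormalWord d => w.prod φ) hxy

end NormalWord

/-- Right multiplication of a coset by one more letter `t^ε r_ε` of its normal form. -/
noncomputable def cosetShift (r : ∀ u : ℤˣ, d.set u)
    (c : Quotient (QuotientGroup.rightRel (of : H →* HNNExtension H A B φ).range)) :
    Quotient (QuotientGroup.rightRel (of : H →* HNNExtension H A B φ).range) :=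
  let ε := lastSign (c.out • (empty : NormalWord d)).toList
  Quotient.mk _ (c.out * (t ^ (ε : ℤ) * of (r ε : H)))

theorem exists_toList_out_cosetShift (r : ∀ u : ℤˣ, d.set u)
    (c : Quotient (QuotientGroup.rightRel (of : H →* HNNExtension H A B φ).range)) :
    ∃ ε : ℤˣ, ((cosetShift r c).out • (empty : NormalWord d)).toList =
      (c.out • (empty : NormalWord d)).toList ++ [(ε, (r ε : H))] := by
  refine ⟨lastSign (c.out • (empty : NormalWord d)).toList, ?_⟩
  rw [← toList_mul_smul_empty _ _ (r _).2]
  exact (rightRel_iff_toList_smul_empty_eq _ _).1 (Quotient.mk_out _)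

theorem cosetShift_injective (r : ∀ u : ℤˣ, d.set u) :
    Function.Injective (cosetShift (φ := φ) r) := by
  intro c c' h
  obtain ⟨ε, hc⟩ := exists_toList_out_cosetShift r c
  obtain ⟨ε', hc'⟩ := exists_toList_out_cosetShift r c'
  rw [h, hc'] at hc
  exact Quotient.out_equiv_out.1
    ((rightRel_iff_toList_smul_empty_eq _ _).2 (List.append_inj_left' hc rfl).symm)

theorem cosetShift_ne_cosetShift {r r' : ∀ u : ℤˣ, d.set u} (hr : ∀ u, (r u : H) ≠ r' u)
    (c c' : Quotient (QuotientGroup.rightRel (of : H →* HNNExtension H A B φ).range)) :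
    cosetShift r c ≠ cosetShift r' c' := by
  intro h
  obtain ⟨ε, hc⟩ := exists_toList_out_cosetShift r c
  obtain ⟨ε', hc'⟩ := exists_toList_out_cosetShift r' c'
  rw [h, hc'] at hc
  obtain ⟨rfl, hrr⟩ := Prod.mk.inj (List.singleton_inj.1 (List.append_inj_right' hc rfl))
  exact hr ε' hrr.symm

theorem exists_cosetDist_cosetShift_le {α : Type*} {η : α → HNNExtension H A B φ}
    {inv : α → α} (hsym : IsSymmetricGen η inv) (r : ∀ u : ℤˣ, d.set u) :
    ∃ k, ∀ c, cosetDist (of : H →* HNNExtension H A B φ).range η c (cosetShift r c) ≤ k := by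
  obtain ⟨k, hk⟩ := exists_cosetDist_mk_mul_le (of : H →* HNNExtension H A B φ).range η hsym
    fun u : ℤˣ => t ^ (u : ℤ) * of (r u : H)
  refine ⟨k, fun c => ?_⟩
  have hc := hk c.out (lastSign (c.out • (empty : NormalWord d)).toList)
  rwa [Quotient.out_eq] at hc

end HNNExtension

theorem stmt_17_general {H : Type*} [Group H] (A B : Subgroup H) (φ : A ≃* B)
    (hA : 2 ≤ Cardinal.mk (H ⧸ A)) (hB : 2 ≤ Cardinal.mk (H ⧸ B))
    {α : Type*} (η : α → HNNExtension H A B φ) (inv : α → α)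
    (hsym : IsSymmetricGen η inv) :
    ∃ (f : Quotient (QuotientGroup.rightRel
          (HNNExtension.of : H →* HNNExtension H A B φ).range) →
        Quotient (QuotientGroup.rightRel
          (HNNExtension.of : H →* HNNExtension H A B φ).range))
      (k : ℕ),
      (∀ x, cosetDist (HNNExtension.of : H →* HNNExtension H A B φ).range η (f x) x ≤ k) ∧
      (∀ x, ∃ y z, y ≠ z ∧ f y = x ∧ f z = x) := by
  open HNNExtension in
  obtain ⟨d⟩ := NormalWord.TransversalPair.nonempty H A B
  have hindex (u : ℤˣ) : 2 ≤ Cardinal.mk (H ⧸ toSubgroup A B u) := by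
    rcases Int.units_eq_one_or u with rfl | rfl
    exacts [hA, hB]
  choose r₀ h₀ r₁ h₁ hne using fun u => d.exists_ne_mem_set u (hindex u)
  obtain ⟨k₀, hk₀⟩ := exists_cosetDist_cosetShift_le hsym fun u => ⟨r₀ u, h₀ u⟩
  obtain ⟨k₁, hk₁⟩ := exists_cosetDist_cosetShift_le hsym fun u => ⟨r₁ u, h₁ u⟩
  obtain ⟨f, hf, hfib⟩ := exists_two_preimages_of_injective_of_disjoint
    (fun x y => cosetDist (of : H →* HNNExtension H A B φ).range η x y ≤ max k₀ k₁)
    (fun x => by simp [cosetDist_self]) (cosetShift_injective _) (cosetShift_injective _)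
    (cosetShift_ne_cosetShift hne) (fun c => (hk₀ c).trans (le_max_left _ _))
    (fun c => (hk₁ c).trans (le_max_right _ _))
  exact ⟨f, max k₀ k₁, hf, hfib⟩

/-- For an HNN extension `G = ⟨H, t | t a t⁻¹ = φ(a), a ∈ A⟩` with
`[H:A] ≥ 2`, `[H:B] ≥ 2` and a finite symmetric generating set `η : Σ → G`, the Schreier
graph of `G` with respect to the canonical image of `H` satisfies the Gromov condition. -/
theorem stmt_17 {H : Type*} [Group H] (A B : Subgroup H) (φ : A ≃* B)
    (hA : 2 ≤ Cardinal.mk (H ⧸ A)) (hB : 2 ≤ Cardinal.mk (H ⧸ B))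
    {α : Type*} [Fintype α] (η : α → HNNExtension H A B φ) (inv : α → α)
    (hsym : IsSymmetricGen η inv) :
    ∃ (f : Quotient (QuotientGroup.rightRel
          (HNNExtension.of : H →* HNNExtension H A B φ).range) →
        Quotient (QuotientGroup.rightRel
          (HNNExtension.of : H →* HNNExtension H A B φ).range))
      (k : ℕ),
      (∀ x, cosetDist (HNNExtension.of : H →* HNNExtension H A B φ).range η (f x) x ≤ k) ∧
      (∀ x, ∃ y z, y ≠ z ∧ f y = x ∧ f z = x) :=
  stmt_17_general A B φ hA hB η inv hsym
end

section
/- There exist connected, locally finite graphs Γ and Γ′ and a quasi-isometry f from the vertex set of Γ to the vertex set of Γ′ (with respect to the graph metrics) such that Γ satisfies the Gromov condition (there is a map g from the vertices of Γ to themselves with sup_v d(g(v), v) finite and |g⁻¹(v)| ≥ 2 for every vertex v) while Γ′ fails the doubling condition (for every k ∈ ℕ there is a nonempty finite set U of vertices of Γ′ whose k-th neighborhood N^k(U) has fewer than 2·|U| elements). Consequently, the Gromov condition is not a quasi-isometry invariant of connected locally finite graphs. -/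
/-! Let `Γ` be the binary tree whose levels are made into cliques and whose consecutive levels
are completely joined. Deleting the first letter of a word is a two-to-one map moving every
vertex by at most one, so `Γ` satisfies the Gromov condition. On the other hand two vertices at
levels `a` and `b` are at distance `|a - b|` or `|a - b| + 1`, so the level map is a
quasi-isometry onto the ray `ℕ`, and the ray is not doubling: the `k`-neighbourhood of
`{0, …, k}` is `{0, …, 2k}`. -/

namespace SimpleGraph

variable {V : Type*} {G : SimpleGraph V}

theorem Walk.le_add_length {φ : V → ℕ} (hφ : ∀ a b, G.Adj a b → φ a ≤ φ b + 1) {u v : V}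
    (p : G.Walk u v) : φ u ≤ φ v + p.length := by
  induction p with
  | nil => simp
  | cons h _ ih =>
    have := hφ _ _ h
    rw [Walk.length_cons]
    omega

theorem Reachable.le_add_dist {φ : V → ℕ} (hφ : ∀ a b, G.Adj a b → φ a ≤ φ b + 1) {u v : V}
    (h : G.Reachable u v) : φ u ≤ φ v + G.dist u v := by
  obtain ⟨p, hp⟩ := h.exists_walk_length_eq_dist
  exact hp ▸ p.le_add_length hφ

theorem Connected.dist_iterate_le (hG : G.Connected) {g : V → V} (hg : ∀ v, G.dist v (g v) ≤ 1)
    (v : V) : ∀ n : ℕ, G.dist v (g^[n] v) ≤ n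
  | 0 => by simp
  | n + 1 => by
    rw [Function.iterate_succ_apply']
    calc G.dist v (g (g^[n] v)) ≤ G.dist v (g^[n] v) + G.dist (g^[n] v) (g (g^[n] v)) :=
          hG.dist_triangle
      _ ≤ n + 1 := add_le_add (hG.dist_iterate_le hg v n) (hg _)

theorem hasse_nat_adj {a b : ℕ} : (hasse ℕ).Adj a b ↔ a + 1 = b ∨ b + 1 = a := by
  simp [hasse_adj, Order.covBy_iff_add_one_eq]

theorem hasse_nat_connected : (hasse ℕ).Connected :=
  ⟨hasse_preconnected_of_succ ℕ⟩

theorem hasse_nat_neighborSet_finite (n : ℕ) : ((hasse ℕ).neighborSet n).Finite :=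
  (Set.finite_Iic (n + 1)).subset fun m h ↦ by
    rw [mem_neighborSet, hasse_nat_adj] at h
    simp only [Set.mem_Iic]
    omega

theorem hasse_nat_dist (a b : ℕ) : (hasse ℕ).dist a b = a - b + (b - a) := by
  wlog hab : a ≤ b generalizing a b
  · rw [dist_comm, this b a (by omega)]
    omega
  have lower : b ≤ a + (hasse ℕ).dist b a :=
    (hasse_nat_connected.preconnected b a).le_add_dist (φ := id) fun x y h ↦ by
      rw [hasse_nat_adj] at h
      exact (by omega : x ≤ y + 1)
  have upper := hasse_nat_connected.dist_iterate_le (g := Nat.pred) (fun n ↦ ?_) b (b - a)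
  · rw [Nat.pred_iterate, Nat.sub_sub_self hab] at upper
    rw [dist_comm]
    omega
  · cases n with
    | zero => simp
    | succ n => exact (dist_eq_one_iff_adj.2 (hasse_nat_adj.2 (Or.inr rfl))).le

theorem hasse_nat_ncard_neighborhood_range_lt (k : ℕ) :
    {n : ℕ | ∃ m ∈ Finset.range (k + 1), (hasse ℕ).dist m n ≤ k}.ncard
      < 2 * (Finset.range (k + 1)).card := by
  have hsub : {n : ℕ | ∃ m ∈ Finset.range (k + 1), (hasse ℕ).dist m n ≤ k}
      ⊆ ↑(Finset.range (2 * k + 1)) := by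
    rintro n ⟨m, hm, hd⟩
    rw [hasse_nat_dist] at hd
    simp only [Finset.mem_range, Finset.coe_range, Set.mem_Iio] at hm ⊢
    omega
  calc _ ≤ (↑(Finset.range (2 * k + 1)) : Set ℕ).ncard :=
        Set.ncard_le_ncard hsub (Finset.finite_toSet _)
    _ < 2 * (Finset.range (k + 1)).card := by
      rw [Set.ncard_coe_finset, Finset.card_range, Finset.card_range]
      omega

/-- The `α`-ary tree with each level made into a clique and consecutive levels completely
joined. -/
def levelGraph (α : Type*) : SimpleGraph (List α) where
  Adj u v := u ≠ v ∧ u.length ≤ v.length + 1 ∧ v.length ≤ u.length + 1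
  symm := ⟨fun _ _ h ↦ ⟨h.1.symm, h.2.2, h.2.1⟩⟩
  loopless := ⟨fun _ h ↦ h.1 rfl⟩

namespace levelGraph

variable {α : Type*}

theorem adj_iff {u v : List α} :
    (levelGraph α).Adj u v ↔ u ≠ v ∧ u.length ≤ v.length + 1 ∧ v.length ≤ u.length + 1 :=
  Iff.rfl

theorem dist_le_one {u v : List α} (h₁ : u.length ≤ v.length + 1) (h₂ : v.length ≤ u.length + 1) :
    (levelGraph α).dist u v ≤ 1 := by
  by_cases huv : u = v
  · simp [huv]
  · exact (dist_eq_one_iff_adj.2 (adj_iff.2 ⟨huv, h₁, h₂⟩)).le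

theorem dist_tail_le_one (v : List α) : (levelGraph α).dist v v.tail ≤ 1 :=
  dist_le_one (by rw [List.length_tail]; omega) (by rw [List.length_tail]; omega)

theorem connected : (levelGraph α).Connected := by
  have hnil : ∀ v : List α, (levelGraph α).Reachable [] v := by
    intro v
    induction v with
    | nil => rfl
    | cons a l ih =>
      refine ih.trans (Adj.reachable (adj_iff.2 ⟨(List.cons_ne_self a l).symm, ?_, ?_⟩)) <;>
        simp only [List.length_cons] <;> omega
  exact ⟨fun u v ↦ (hnil u).symm.trans (hnil v)⟩

theorem neighborSet_finite [Finite α] (v : List α) : ((levelGraph α).neighborSet v).Finite :=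
  (List.finite_length_le α (v.length + 1)).subset fun _ h ↦ (adj_iff.1 h).2.2

theorem dist_length_le_dist (u v : List α) :
    (hasse ℕ).dist u.length v.length ≤ (levelGraph α).dist u v := by
  have hφ : ∀ a b : List α, (levelGraph α).Adj a b → a.length ≤ b.length + 1 :=
    fun _ _ h ↦ (adj_iff.1 h).2.1
  have h₁ := (connected.preconnected u v).le_add_dist hφ
  have h₂ := (connected.preconnected v u).le_add_dist hφ
  rw [dist_comm] at h₂
  rw [hasse_nat_dist]
  omega

/-- Climb from the longer word to the level of the shorter one, then take one more step. -/
theorem dist_le_dist_length_add_one (u v : List α) :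
    (levelGraph α).dist u v ≤ (hasse ℕ).dist u.length v.length + 1 := by
  wlog huv : u.length ≤ v.length generalizing u v
  · rw [dist_comm, dist_comm (G := hasse ℕ)]
    exact this v u (by omega)
  set w := v.drop (v.length - u.length)
  have hw : w.length = u.length := by simp [w]; omega
  have hvw : (levelGraph α).dist v w ≤ v.length - u.length := by
    simpa only [List.tail_iterate] using
      connected.dist_iterate_le dist_tail_le_one v (v.length - u.length)
  calc (levelGraph α).dist u v ≤ (levelGraph α).dist u w + (levelGraph α).dist w v :=
        connected.dist_triangle
    _ ≤ 1 + (v.length - u.length) := by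
        rw [dist_comm (u := w)]
        exact add_le_add (dist_le_one (by omega) (by omega)) hvw
    _ = (hasse ℕ).dist u.length v.length + 1 := by rw [hasse_nat_dist]; omega

end levelGraph

end SimpleGraph

open SimpleGraph

/-- There are connected, locally finite graphs `Γ`, `Γ′` and a
quasi-isometry `f` between their vertex sets such that `Γ` satisfies the Gromov condition
while `Γ′` fails the doubling condition. Hence the Gromov condition is not a
quasi-isometry invariant of connected locally finite graphs. -/
theorem stmt_18 :
    ∃ (V V' : Type) (Γ : SimpleGraph V) (Γ' : SimpleGraph V') (f : V → V'),
      Γ.Connected ∧ Γ'.Connected ∧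
      (∀ v : V, (Γ.neighborSet v).Finite) ∧ (∀ v' : V', (Γ'.neighborSet v').Finite) ∧
      -- `f` is a quasi-isometry
      (∃ C : ℝ, 0 < C ∧
        (∀ x y : V,
          (1 / C) * (Γ.dist x y : ℝ) - C ≤ (Γ'.dist (f x) (f y) : ℝ) ∧
          (Γ'.dist (f x) (f y) : ℝ) ≤ C * (Γ.dist x y : ℝ) + C) ∧
        (∀ v' : V', ∃ x : V, (Γ'.dist v' (f x) : ℝ) ≤ C)) ∧
      -- `Γ` satisfies the Gromov condition
      (∃ (g : V → V) (k : ℕ),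
        (∀ v, Γ.dist (g v) v ≤ k) ∧ (∀ v, ∃ u w, u ≠ w ∧ g u = v ∧ g w = v)) ∧
      -- `Γ'` fails the doubling condition
      (∀ k : ℕ, ∃ U : Finset V', U.Nonempty ∧
        ({v' : V' | ∃ u ∈ U, Γ'.dist u v' ≤ k} : Set V').ncard < 2 * U.card) := by
  refine ⟨List Bool, ℕ, levelGraph Bool, hasse ℕ, List.length, levelGraph.connected,
    hasse_nat_connected, levelGraph.neighborSet_finite, hasse_nat_neighborSet_finite,
    ⟨2, two_pos, fun x y ↦ ?_, fun n ↦ ⟨List.replicate n false, by simp⟩⟩,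
    ⟨List.tail, 1, fun v ↦ dist_comm.trans_le (levelGraph.dist_tail_le_one v),
      fun v ↦ ⟨true :: v, false :: v, by simp, rfl, rfl⟩⟩,
    fun k ↦ ⟨Finset.range (k + 1), Finset.nonempty_range_add_one,
      hasse_nat_ncard_neighborhood_range_lt k⟩⟩
  have h₁ : ((hasse ℕ).dist x.length y.length : ℝ) ≤ (levelGraph Bool).dist x y := by
    exact_mod_cast levelGraph.dist_length_le_dist x y
  have h₂ : ((levelGraph Bool).dist x y : ℝ) ≤ (hasse ℕ).dist x.length y.length + 1 := by
    exact_mod_cast levelGraph.dist_le_dist_length_add_one x y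
  constructor <;> linarith
end
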